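/- arXiv:1708.02406 — 9 statements merged into one kernel-verified Lean document; each statement's English description precedes it below -/
import Mathlib

section
/- For a fixed assignment x ∈ X₁×…×Xₙ and a tree G=(V,E), define for each assignment u the coefficient α_u = Σᵢ 1[uᵢ=xᵢ] − Σ_{(i,j)∈E} 1[uᵢ=xᵢ ∨ uⱼ=xⱼ]. Then α_x = 1, and α_u ≤ 0 for every u ≠ x. -/
/-!
Write `S = {i | uᵢ = xᵢ}`, so that `α_u = #S - #{edges meeting S}`. For `u = x` every edge meets
`S = V`, and a tree has `n - 1` edges. For `u ≠ x` pick `r ∉ S`; sending each `v ∈ S` to its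
first edge on a shortest path to `r` injects `S` into the edges meeting `S`: two vertices with the
same edge would each be strictly closer to `r` than the other.
-/

open Finset

namespace SimpleGraph

variable {V : Type*} {G : SimpleGraph V}

theorem Reachable.exists_adj_dist_lt {v r : V} (h : G.Reachable v r) (hv : v ≠ r) :
    ∃ w, G.Adj v w ∧ G.dist w r < G.dist v r := by
  obtain ⟨p, hp⟩ := h.exists_walk_length_eq_dist
  cases p with
  | nil => exact absurd rfl hv
  | cons hadj q =>
    refine ⟨_, hadj, ?_⟩
    have := dist_le q
    rw [Walk.length_cons] at hp
    omega

theorem Preconnected.card_le_card_filter_exists_mem [Fintype V] [DecidableEq V]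
    [DecidableRel G.Adj] (hG : G.Preconnected) {s : Finset V} {r : V} (hr : r ∉ s) :
    #s ≤ #{e ∈ G.edgeFinset | ∃ v ∈ s, v ∈ e} := by
  have hparent : ∀ v ∈ s, ∃ w, G.Adj v w ∧ G.dist w r < G.dist v r := fun v hv =>
    (hG v r).exists_adj_dist_lt (ne_of_mem_of_not_mem hv hr)
  choose! parent hadj hdist using hparent
  refine card_le_card_of_injOn (fun v => s(v, parent v)) (fun v hv => ?_)
    (fun v hv w hw hvw => ?_)
  · simp only [coe_filter, Set.mem_ofPred_eq, mem_edgeFinset, mem_edgeSet]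
    exact ⟨hadj v hv, v, hv, Sym2.mem_mk_left _ _⟩
  · rcases Sym2.eq_iff.1 hvw with ⟨h, -⟩ | ⟨hv_eq, hw_eq⟩
    · exact h
    · have hw_closer := hdist v hv
      have hv_closer := hdist w hw
      rw [hw_eq] at hw_closer
      rw [← hv_eq] at hv_closer
      omega

theorem card_filter_lt_adj_eq_card_filter_edgeFinset [LinearOrder V] [Fintype V] [DecidableRel G.Adj]
    (p : Sym2 V → Prop) [DecidablePred p] :
    #{e : V × V | e.1 < e.2 ∧ G.Adj e.1 e.2 ∧ p s(e.1, e.2)} = #{e ∈ G.edgeFinset | p e} := by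
  refine card_nbij' (fun e => s(e.1, e.2)) (fun e => (e.inf, e.sup)) ?_ ?_ ?_ ?_
  · rintro ⟨a, b⟩ h
    simp_all
  · intro e he
    induction e with | _ a b
    simp only [coe_filter, Set.mem_ofPred_eq, mem_edgeFinset, mem_edgeSet] at he ⊢
    rcases he.1.ne.lt_or_gt with h | h
    · simp_all [h.le]
    · simp_all [h.le, Sym2.eq_swap, G.adj_comm]
  · rintro ⟨a, b⟩ h
    simp only [coe_filter, Set.mem_ofPred_eq, mem_univ, true_and] at h
    simp [h.1.le]
  · intro e _
    exact Sym2.sortEquiv.left_inv e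

end SimpleGraph

theorem stmt2_general {n : ℕ} {X : Fin n → Type*} [∀ i, DecidableEq (X i)]
    (G : SimpleGraph (Fin n)) [DecidableRel G.Adj] (hG : G.IsTree)
    (x : ∀ i, X i) :
    (fun u : ∀ i, X i =>
      ((Finset.univ.filter (fun i => u i = x i)).card : ℤ)
        - ((Finset.univ.filter (fun e : Fin n × Fin n =>
              e.1 < e.2 ∧ G.Adj e.1 e.2 ∧ (u e.1 = x e.1 ∨ u e.2 = x e.2))).card : ℤ)) x = 1
    ∧ ∀ u : ∀ i, X i, u ≠ x →
      ((Finset.univ.filter (fun i => u i = x i)).card : ℤ)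
        - ((Finset.univ.filter (fun e : Fin n × Fin n =>
              e.1 < e.2 ∧ G.Adj e.1 e.2 ∧ (u e.1 = x e.1 ∨ u e.2 = x e.2))).card : ℤ) ≤ 0 := by
  refine ⟨?_, fun u hu => ?_⟩
  · have hedges := G.card_filter_lt_adj_eq_card_filter_edgeFinset fun _ => True
    have htree := hG.card_edgeFinset
    simp only [and_true, filter_true, Fintype.card_fin] at hedges htree
    simp only [eq_self, or_self, and_true, filter_true, card_univ, Fintype.card_fin, hedges]
    omega
  · obtain ⟨r, hr⟩ := Function.ne_iff.1 hu
    have hcard := hG.connected.preconnected.card_le_card_filter_exists_mem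
      (s := {i | u i = x i}) (r := r) (by simpa using hr)
    rw [← G.card_filter_lt_adj_eq_card_filter_edgeFinset] at hcard
    have hincident : ∀ a b : Fin n,
        (∃ v ∈ ({i | u i = x i} : Finset (Fin n)), v ∈ s(a, b)) ↔ u a = x a ∨ u b = x b := by
      simp [Sym2.mem_iff, and_or_left, exists_or]
    simp only [hincident] at hcard
    omega

/-- Coefficients `α_u = Σᵢ 1[uᵢ=xᵢ] − Σ_{(i,j)∈E} 1[uᵢ=xᵢ ∨ uⱼ=xⱼ]` for a tree satisfy
`α_x = 1` and `α_u ≤ 0` for `u ≠ x`. -/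
theorem stmt2 {n : ℕ} (hn : 1 ≤ n) {X : Fin n → Type*} [∀ i, Fintype (X i)]
    [∀ i, Nonempty (X i)] [∀ i, DecidableEq (X i)]
    (G : SimpleGraph (Fin n)) [DecidableRel G.Adj] (hG : G.IsTree)
    (x : ∀ i, X i) :
    (fun u : ∀ i, X i =>
      ((Finset.univ.filter (fun i => u i = x i)).card : ℤ)
        - ((Finset.univ.filter (fun e : Fin n × Fin n =>
              e.1 < e.2 ∧ G.Adj e.1 e.2 ∧ (u e.1 = x e.1 ∨ u e.2 = x e.2))).card : ℤ)) x = 1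
    ∧ ∀ u : ∀ i, X i, u ≠ x →
      ((Finset.univ.filter (fun i => u i = x i)).card : ℤ)
        - ((Finset.univ.filter (fun e : Fin n × Fin n =>
              e.1 < e.2 ∧ G.Adj e.1 e.2 ∧ (u e.1 = x e.1 ∨ u e.2 = x e.2))).card : ℤ) ≤ 0 :=
  stmt2_general G hG x
end

section
/- Let p be a probability distribution on a finite product space with tree graph G=(V,E), and x a fixed assignment. Then I(x;μ) = Σ_u α_u p(u), where α_u = Σᵢ 1[uᵢ=xᵢ] − Σ_{(i,j)∈E} 1[uᵢ=xᵢ ∨ uⱼ=xⱼ] and I(x;μ) = Σᵢ(1−dᵢ)μᵢ(xᵢ) + Σ_{(i,j)∈E} μᵢⱼ(xᵢ,xⱼ). -/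
/-!
For a fixed assignment `u`, write `bᵢ = 1[uᵢ = xᵢ]`. By inclusion–exclusion,
`1[uᵢ = xᵢ ∨ uⱼ = xⱼ] = bᵢ + bⱼ - bᵢbⱼ`, and summing `bᵢ + bⱼ` over the edges counts each `bᵢ`
exactly `dᵢ` times. Hence `αᵤ = Σᵢ (1 - dᵢ) bᵢ + Σ_{(i,j) ∈ E} bᵢbⱼ`, and multiplying by `p(u)`
and summing over `u` gives `I(x; μ)`.
-/

open Finset

namespace SimpleGraph

variable {V : Type*} [Fintype V] (G : SimpleGraph V) [DecidableRel G.Adj]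

lemma sum_degree_mul_eq_sum_adj {R : Type*} [CommSemiring R] (a : V → R) :
    ∑ i, (G.degree i : R) * a i = ∑ e ∈ univ.filter (fun e : V × V => G.Adj e.1 e.2), a e.1 := by
  rw [sum_filter, Fintype.sum_prod_type]
  refine sum_congr rfl fun i _ => ?_
  simp only [← sum_filter, sum_const, nsmul_eq_mul, ← neighborFinset_eq_filter,
    card_neighborFinset_eq_degree]

lemma sum_degree_mul_eq_sum_lt_adj [LinearOrder V] {R : Type*} [CommSemiring R] (a : V → R) :
    ∑ i, (G.degree i : R) * a i
      = ∑ e ∈ univ.filter (fun e : V × V => e.1 < e.2 ∧ G.Adj e.1 e.2), (a e.1 + a e.2) := by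
  have hswap : ∑ e ∈ univ.filter (fun e : V × V => G.Adj e.1 e.2 ∧ ¬ e.1 < e.2), a e.1
      = ∑ e ∈ univ.filter (fun e : V × V => e.1 < e.2 ∧ G.Adj e.1 e.2), a e.2 := by
    refine sum_equiv (Equiv.prodComm V V) (fun e => ?_) (fun _ _ => rfl)
    simp only [mem_filter, mem_univ, true_and, Equiv.prodComm_apply, Prod.fst_swap, Prod.snd_swap]
    exact ⟨fun ⟨h, hlt⟩ => ⟨lt_of_le_of_ne (not_lt.1 hlt) h.ne.symm, h.symm⟩,
      fun ⟨hlt, h⟩ => ⟨h.symm, not_lt.2 hlt.le⟩⟩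
  rw [sum_degree_mul_eq_sum_adj, ← sum_filter_add_sum_filter_not _ (fun e : V × V => e.1 < e.2),
    filter_filter, filter_filter, hswap, sum_add_distrib]
  simp only [and_comm]

lemma sum_one_sub_degree_mul_boole_add_sum_boole_and [LinearOrder V] {R : Type*} [CommRing R]
    (P : V → Prop) [DecidablePred P] :
    ∑ i, (1 - (G.degree i : R)) * (if P i then 1 else 0)
      + ∑ e ∈ univ.filter (fun e : V × V => e.1 < e.2 ∧ G.Adj e.1 e.2),
          (if P e.1 ∧ P e.2 then 1 else 0)
    = (#(univ.filter P) : R)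
      - #(univ.filter fun e : V × V => e.1 < e.2 ∧ G.Adj e.1 e.2 ∧ (P e.1 ∨ P e.2)) := by
  have hor : ∀ e : V × V, (if P e.1 ∨ P e.2 then (1 : R) else 0)
      = (if P e.1 then 1 else 0) + (if P e.2 then 1 else 0) - (if P e.1 ∧ P e.2 then 1 else 0) := by
    intro e
    by_cases h1 : P e.1 <;> by_cases h2 : P e.2 <;> simp [h1, h2]
  have hcard : (#(univ.filter fun e : V × V => e.1 < e.2 ∧ G.Adj e.1 e.2 ∧ (P e.1 ∨ P e.2)) : R)
      = ∑ e ∈ univ.filter (fun e : V × V => e.1 < e.2 ∧ G.Adj e.1 e.2),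
          (if P e.1 ∨ P e.2 then 1 else 0) := by
    simp only [← and_assoc, ← filter_filter, natCast_card_filter]
  rw [hcard, natCast_card_filter, sum_congr rfl fun e _ => hor e, sum_sub_distrib,
    ← G.sum_degree_mul_eq_sum_lt_adj fun i => if P i then (1 : R) else 0]
  simp only [sub_mul, one_mul, sum_sub_distrib]
  ring

end SimpleGraph

theorem stmt3_general {n : ℕ} {X : Fin n → Type*} [∀ i, Fintype (X i)]
    [∀ i, DecidableEq (X i)]
    (p : (∀ i, X i) → ℝ)
    (G : SimpleGraph (Fin n)) [DecidableRel G.Adj]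
    (x : ∀ i, X i) :
    (∑ i, (1 - (G.degree i : ℝ)) * (∑ z, if z i = x i then p z else 0))
      + (∑ e ∈ Finset.univ.filter (fun e : Fin n × Fin n => e.1 < e.2 ∧ G.Adj e.1 e.2),
          ∑ z, if z e.1 = x e.1 ∧ z e.2 = x e.2 then p z else 0)
    = ∑ u : ∀ i, X i,
        (((Finset.univ.filter (fun i => u i = x i)).card : ℝ)
          - ((Finset.univ.filter (fun e : Fin n × Fin n =>
                e.1 < e.2 ∧ G.Adj e.1 e.2 ∧ (u e.1 = x e.1 ∨ u e.2 = x e.2))).card : ℝ))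
          * p u := by
  simp_rw [← G.sum_one_sub_degree_mul_boole_add_sum_boole_and, add_mul, sum_mul, mul_assoc,
    boole_mul, sum_add_distrib, mul_sum]
  rw [sum_comm, sum_comm (s := univ.filter _)]

/-- `I(x;μ) = Σ_u α_u p(u)` where `α_u = Σᵢ 1[uᵢ=xᵢ] − Σ_{(i,j)∈E} 1[uᵢ=xᵢ ∨ uⱼ=xⱼ]`. -/
theorem stmt3 {n : ℕ} {X : Fin n → Type*} [∀ i, Fintype (X i)] [∀ i, Nonempty (X i)]
    [∀ i, DecidableEq (X i)]
    (p : (∀ i, X i) → ℝ) (hp0 : ∀ z, 0 ≤ p z) (hp1 : ∑ z, p z = 1)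
    (G : SimpleGraph (Fin n)) [DecidableRel G.Adj] (hG : G.IsTree)
    (x : ∀ i, X i) :
    (∑ i, (1 - (G.degree i : ℝ)) * (∑ z, if z i = x i then p z else 0))
      + (∑ e ∈ Finset.univ.filter (fun e : Fin n × Fin n => e.1 < e.2 ∧ G.Adj e.1 e.2),
          ∑ z, if z e.1 = x e.1 ∧ z e.2 = x e.2 then p z else 0)
    = ∑ u : ∀ i, X i,
        (((Finset.univ.filter (fun i => u i = x i)).card : ℝ)
          - ((Finset.univ.filter (fun e : Fin n × Fin n =>
                e.1 < e.2 ∧ G.Adj e.1 e.2 ∧ (u e.1 = x e.1 ∨ u e.2 = x e.2))).card : ℝ))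
          * p u :=
  stmt3_general p G x
end

section
/- Let p be a probability distribution on a finite product space with tree graph G, x a fixed assignment, and suppose the singleton and pairwise tree marginals μ of p satisfy I(x;μ) ≥ 0. Then for any distribution q with the same marginals μ, q(x) ≥ I(x;μ), and this bound is independent of q; i.e., the quantity max(I(x;μ),0) is a lower bound on q(x) for all q ∈ P(μ). -/
open Finset
open SimpleGraph Walk

lemma aux_parent {n : ℕ} {G : SimpleGraph (Fin n)} (hG : G.IsTree) (r : Fin n)
    (f : ∀ v, G.Walk v r) (hf : ∀ v, (f v).IsPath)
    (hf' : ∀ v (p : G.Walk v r), p.IsPath → p = f v)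
    {a b : Fin n} (hab : G.Adj a b) (h' : (f a).length ≤ (f b).length) :
    b ≠ r ∧ (f b).getVert 1 = a := by
  have hbr : b ≠ r := by
    rintro rfl
    have h0 : (Walk.nil : G.Walk b b) = f b := hf' b .nil IsPath.nil
    have h1 : (Walk.cons hab .nil : G.Walk a b) = f a :=
      hf' a _ (IsPath.nil.cons (by simp [hab.ne]))
    rw [← h0, ← h1] at h'
    simp at h'
  refine ⟨hbr, ?_⟩
  have hbsupp : b ∉ (f a).support := by
    intro hy
    have htake : (f a).takeUntil b hy = .cons hab .nil :=
      ExistsUnique.unique (hG.existsUnique_path a b) ((hf a).takeUntil hy)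
        (IsPath.nil.cons (by simp [hab.ne]))
    have hdrop : (f a).dropUntil b hy = f b := hf' b _ ((hf a).dropUntil hy)
    have hspec := (f a).take_spec hy
    have hlen := congrArg Walk.length hspec
    rw [Walk.length_append, htake, hdrop] at hlen
    simp at hlen
    omega
  have hcons : Walk.cons hab.symm (f a) = f b :=
    hf' b _ ((Walk.cons_isPath_iff _ _).2 ⟨hf a, hbsupp⟩)
  rw [← hcons]
  simp [Walk.getVert_cons_succ]

lemma aux_forest {n : ℕ} {G : SimpleGraph (Fin n)} [DecidableRel G.Adj] (hG : G.IsTree)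
    (T : Finset (Fin n)) {r : Fin n} (hr : r ∈ T) :
    ((Finset.univ.filter (fun e : Fin n × Fin n => e.1 < e.2 ∧ G.Adj e.1 e.2)).filter
      (fun e => e.1 ∈ T ∧ e.2 ∈ T)).card ≤ (T.erase r).card := by
  choose f hf hf' using fun v => (hG.existsUnique_path v r)
  classical
  apply Finset.card_le_card_of_surjOn (fun w =>
    if (f w).getVert 1 < w then ((f w).getVert 1, w) else (w, (f w).getVert 1))
  intro e he
  simp only [Finset.coe_filter, Set.mem_setOf_eq, Finset.mem_filter, Finset.mem_univ,
    true_and] at he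
  obtain ⟨⟨hlt, hadj⟩, h1T, h2T⟩ := he
  rcases le_or_gt (f e.1).length (f e.2).length with h' | h'
  · obtain ⟨hne, hv⟩ := aux_parent hG r f hf (fun v p hp => hf' v p hp) hadj h'
    refine ⟨e.2, by simp [Finset.mem_erase, hne, h2T], ?_⟩
    simp [hv, hlt]
  · obtain ⟨hne, hv⟩ := aux_parent hG r f hf (fun v p hp => hf' v p hp) hadj.symm h'.le
    refine ⟨e.1, by simp [Finset.mem_erase, hne, h1T], ?_⟩
    simp [hv, not_lt.2 hlt.le]

lemma aux_Ecard {n : ℕ} {G : SimpleGraph (Fin n)} [DecidableRel G.Adj] (hG : G.IsTree) :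
    (Finset.univ.filter (fun e : Fin n × Fin n => e.1 < e.2 ∧ G.Adj e.1 e.2)).card + 1 = n := by
  classical
  have hbij : (Finset.univ.filter (fun e : Fin n × Fin n => e.1 < e.2 ∧ G.Adj e.1 e.2)).card
      = G.edgeFinset.card := by
    apply Finset.card_bij (fun e _ => s(e.1, e.2))
    · intro e he
      obtain ⟨e1, e2⟩ := e
      simp only [Finset.mem_filter] at he
      simp [SimpleGraph.mem_edgeFinset, he.2.2]
    · intro a ha b hb hab
      obtain ⟨a1, a2⟩ := a
      obtain ⟨b1, b2⟩ := b
      simp only [Finset.mem_filter, Finset.mem_univ, true_and] at ha hb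
      rw [Sym2.eq_iff] at hab
      rcases hab with ⟨h1, h2⟩ | ⟨h1, h2⟩
      · exact Prod.ext h1 h2
      · subst h1; subst h2
        exact absurd (ha.1.trans hb.1) (lt_irrefl _)
    · intro e he
      induction e using Sym2.ind with
      | _ u v =>
        rw [SimpleGraph.mem_edgeFinset, SimpleGraph.mem_edgeSet] at he
        rcases lt_or_gt_of_ne he.ne with h | h
        · exact ⟨(u, v), by simp [h, he], rfl⟩
        · exact ⟨(v, u), by simp [h, he.symm], Sym2.eq_swap⟩
  rw [hbij]
  have := hG.card_edgeFinset
  simpa using this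

lemma aux_count {n : ℕ} {G : SimpleGraph (Fin n)} [DecidableRel G.Adj] (hG : G.IsTree)
    (S : Finset (Fin n)) (hS : S ≠ Finset.univ) :
    S.card + ∑ e ∈ Finset.univ.filter (fun e : Fin n × Fin n => e.1 < e.2 ∧ G.Adj e.1 e.2),
      (if e.1 ∈ S ∧ e.2 ∈ S then 1 else 0)
    ≤ ∑ i ∈ S, G.degree i := by
  classical
  set E := Finset.univ.filter (fun e : Fin n × Fin n => e.1 < e.2 ∧ G.Adj e.1 e.2) with hE
  have hdeg1 : ∀ i, G.degree i = ∑ j, if G.Adj i j then 1 else 0 := by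
    intro i
    rw [← SimpleGraph.card_neighborFinset_eq_degree, SimpleGraph.neighborFinset_eq_filter,
      Finset.card_filter]
  -- degree sum identity
  have hdeg : ∑ i ∈ S, G.degree i
      = ∑ e ∈ E, ((if e.1 ∈ S then 1 else 0) + (if e.2 ∈ S then 1 else 0)) := by
    have hL : ∑ i ∈ S, G.degree i = ∑ i, ∑ j, (if G.Adj i j ∧ i ∈ S then 1 else 0) := by
      have h1 : ∀ i, (∑ j, if G.Adj i j ∧ i ∈ S then (1:ℕ) else 0)
          = if i ∈ S then G.degree i else 0 := by
        intro i; by_cases h : i ∈ S <;> simp [h, hdeg1]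
      simp_rw [h1]
      rw [Finset.sum_ite_mem, Finset.univ_inter]
    have hR : ∑ e ∈ E, ((if e.1 ∈ S then (1:ℕ) else 0) + (if e.2 ∈ S then 1 else 0))
        = (∑ i, ∑ j, (if i < j ∧ G.Adj i j then (if i ∈ S then 1 else 0) else 0))
          + (∑ i, ∑ j, (if i < j ∧ G.Adj i j then (if j ∈ S then 1 else 0) else 0)) := by
      rw [hE, Finset.sum_filter, Fintype.sum_prod_type]
      rw [← Finset.sum_add_distrib]
      apply Finset.sum_congr rfl; intro i _
      rw [← Finset.sum_add_distrib]
      apply Finset.sum_congr rfl; intro j _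
      split <;> simp
    have hswap : (∑ i, ∑ j, (if i < j ∧ G.Adj i j then (if j ∈ S then (1:ℕ) else 0) else 0))
        = ∑ i, ∑ j, (if j < i ∧ G.Adj i j then (if i ∈ S then 1 else 0) else 0) := by
      rw [Finset.sum_comm]
      apply Finset.sum_congr rfl; intro i _
      apply Finset.sum_congr rfl; intro j _
      exact if_congr (and_congr_right fun _ => G.adj_comm j i) rfl rfl
    rw [hL, hR, hswap, ← Finset.sum_add_distrib]
    apply Finset.sum_congr rfl; intro i _
    rw [← Finset.sum_add_distrib]
    apply Finset.sum_congr rfl; intro j _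
    by_cases ha : G.Adj i j
    · by_cases hs : i ∈ S
      · rcases ha.ne.lt_or_gt with h | h
        · simp [h, ha, hs, asymm h]
        · simp [h, ha, hs, asymm h]
      · simp [hs]
    · simp [ha]
  -- split indicators
  have hsplit : ∑ e ∈ E, ((if e.1 ∈ S then (1:ℕ) else 0) + (if e.2 ∈ S then 1 else 0))
      = (∑ e ∈ E, (if e.1 ∈ S ∧ e.2 ∈ S then 1 else 0))
        + (∑ e ∈ E, (if e.1 ∈ S ∨ e.2 ∈ S then 1 else 0)) := by
    rw [← Finset.sum_add_distrib]
    apply Finset.sum_congr rfl; intro e _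
    by_cases h1 : e.1 ∈ S <;> by_cases h2 : e.2 ∈ S <;> simp [h1, h2]
  -- touching edges bound
  have htouch : S.card ≤ ∑ e ∈ E, (if e.1 ∈ S ∨ e.2 ∈ S then (1:ℕ) else 0) := by
    obtain ⟨r, hr⟩ : ∃ r, r ∉ S := by
      by_contra h
      push_neg at h
      exact hS (Finset.eq_univ_iff_forall.2 h)
    have hrT : r ∈ Sᶜ := Finset.mem_compl.2 hr
    have h1 : (∑ e ∈ E, (if e.1 ∈ S ∨ e.2 ∈ S then (1:ℕ) else 0))
        + (∑ e ∈ E, (if e.1 ∈ Sᶜ ∧ e.2 ∈ Sᶜ then 1 else 0)) = E.card := by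
      rw [← Finset.sum_add_distrib, Finset.card_eq_sum_ones]
      apply Finset.sum_congr rfl; intro e _
      by_cases h1 : e.1 ∈ S <;> by_cases h2 : e.2 ∈ S <;>
        simp [h1, h2, Finset.mem_compl]
    have h2 : (∑ e ∈ E, (if e.1 ∈ Sᶜ ∧ e.2 ∈ Sᶜ then (1:ℕ) else 0))
        = (E.filter (fun e => e.1 ∈ Sᶜ ∧ e.2 ∈ Sᶜ)).card := (Finset.card_filter _ _).symm
    have h3 := aux_forest hG Sᶜ hrT
    rw [← hE] at h3
    have h4 : (Sᶜ.erase r).card = Sᶜ.card - 1 := Finset.card_erase_of_mem hrT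
    have h5 : Sᶜ.card = n - S.card := by
      rw [Finset.card_compl, Fintype.card_fin]
    have h6 : S.card ≤ n := by
      simpa using Finset.card_le_univ S
    have h7 := aux_Ecard hG
    rw [← hE] at h7
    have h8 : 1 ≤ Sᶜ.card := Finset.card_pos.2 ⟨r, hrT⟩
    rw [h2] at h1
    omega
  omega

lemma aux_degsum {n : ℕ} {G : SimpleGraph (Fin n)} [DecidableRel G.Adj] (hG : G.IsTree) :
    (∑ i, G.degree i) + 2 = 2 * n := by
  classical
  rw [SimpleGraph.sum_degrees_eq_twice_card_edges]
  have := hG.card_edgeFinset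
  rw [Fintype.card_fin] at this
  omega


/-- If a distribution `p` has tree marginals `μ` with `I(x;μ) ≥ 0`, then every
distribution `q` with the same marginals satisfies `q x ≥ I(x;μ)`; i.e. `max(I(x;μ),0)`
is a lower bound on `q x` for all `q ∈ P(μ)`. -/
theorem stmt6 {n : ℕ} {X : Fin n → Type*} [∀ i, Fintype (X i)] [∀ i, Nonempty (X i)]
    [∀ i, DecidableEq (X i)]
    (G : SimpleGraph (Fin n)) [DecidableRel G.Adj] (hG : G.IsTree)
    (μ1 : ∀ i, X i → ℝ) (μ2 : ∀ i j, X i → X j → ℝ)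
    (p : (∀ i, X i) → ℝ) (hp0 : ∀ z, 0 ≤ p z) (hp1 : ∑ z, p z = 1)
    (hpμ1 : ∀ i a, (∑ z, if z i = a then p z else 0) = μ1 i a)
    (hpμ2 : ∀ i j, G.Adj i j → ∀ a b, (∑ z, if z i = a ∧ z j = b then p z else 0) = μ2 i j a b)
    (x : ∀ i, X i)
    (hI : 0 ≤ (∑ i, (1 - (G.degree i : ℝ)) * μ1 i (x i))
      + (∑ e ∈ Finset.univ.filter (fun e : Fin n × Fin n => e.1 < e.2 ∧ G.Adj e.1 e.2),
          μ2 e.1 e.2 (x e.1) (x e.2)))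
    (q : (∀ i, X i) → ℝ) (hq0 : ∀ z, 0 ≤ q z) (hq1 : ∑ z, q z = 1)
    (hqμ1 : ∀ i a, (∑ z, if z i = a then q z else 0) = μ1 i a)
    (hqμ2 : ∀ i j, G.Adj i j → ∀ a b, (∑ z, if z i = a ∧ z j = b then q z else 0) = μ2 i j a b) :
    (∑ i, (1 - (G.degree i : ℝ)) * μ1 i (x i))
      + (∑ e ∈ Finset.univ.filter (fun e : Fin n × Fin n => e.1 < e.2 ∧ G.Adj e.1 e.2),
          μ2 e.1 e.2 (x e.1) (x e.2)) ≤ q x := by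
  classical
  set E := Finset.univ.filter (fun e : Fin n × Fin n => e.1 < e.2 ∧ G.Adj e.1 e.2) with hE
  set F : (∀ i, X i) → ℝ := fun z =>
    (∑ i, (1 - (G.degree i : ℝ)) * (if z i = x i then 1 else 0))
      + ∑ e ∈ E, (if z e.1 = x e.1 ∧ z e.2 = x e.2 then (1:ℝ) else 0) with hF
  -- Step A : rewrite the LHS as an expectation
  have h1 : ∑ i, (1 - (G.degree i : ℝ)) * μ1 i (x i)
      = ∑ z, q z * ∑ i, (1 - (G.degree i : ℝ)) * (if z i = x i then 1 else 0) := by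
    simp_rw [← hqμ1, Finset.mul_sum]
    rw [Finset.sum_comm]
    apply Finset.sum_congr rfl; intro z _
    apply Finset.sum_congr rfl; intro i _
    split <;> ring
  have h2 : ∑ e ∈ E, μ2 e.1 e.2 (x e.1) (x e.2)
      = ∑ z, q z * ∑ e ∈ E, (if z e.1 = x e.1 ∧ z e.2 = x e.2 then (1:ℝ) else 0) := by
    have : ∀ e ∈ E, μ2 e.1 e.2 (x e.1) (x e.2)
        = ∑ z, (if z e.1 = x e.1 ∧ z e.2 = x e.2 then q z else 0) := by
      intro e he
      rw [hE, Finset.mem_filter] at he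
      exact (hqμ2 e.1 e.2 he.2.2 (x e.1) (x e.2)).symm
    rw [Finset.sum_congr rfl this, Finset.sum_comm]
    apply Finset.sum_congr rfl; intro z _
    rw [Finset.mul_sum]
    apply Finset.sum_congr rfl; intro e _
    split <;> ring
  have key : (∑ i, (1 - (G.degree i : ℝ)) * μ1 i (x i))
      + (∑ e ∈ E, μ2 e.1 e.2 (x e.1) (x e.2)) = ∑ z, q z * F z := by
    rw [h1, h2, ← Finset.sum_add_distrib]
    apply Finset.sum_congr rfl; intro z _
    rw [hF]; ring
  -- Step B : F x = 1
  have hn : 1 ≤ n := by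
    have : Nonempty (Fin n) := hG.isConnected.nonempty
    exact Fin.pos_iff_nonempty.2 this
  have hds := aux_degsum hG
  have hec := aux_Ecard hG
  rw [← hE] at hec
  have hFx : F x = 1 := by
    rw [hF]
    simp only [if_pos rfl, and_self, if_true, mul_one]
    rw [Finset.sum_sub_distrib, Finset.sum_const, Finset.card_univ, Fintype.card_fin,
      Finset.sum_const, nsmul_eq_mul, mul_one]
    have e2 : ((E.card : ℕ) : ℝ) = (n : ℝ) - 1 := by
      have h := congrArg (fun k : ℕ => (k : ℝ)) hec
      push_cast at h
      linarith
    have e3 : (∑ i, (G.degree i : ℝ)) = 2 * (n : ℝ) - 2 := by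
      have h := congrArg (fun k : ℕ => (k : ℝ)) hds
      push_cast at h
      linarith
    rw [e3, nsmul_eq_mul, mul_one, e2]
    ring
  -- Step C : F z ≤ 0 for z ≠ x
  have hFz : ∀ z, z ≠ x → F z ≤ 0 := by
    intro z hz
    set S : Finset (Fin n) := Finset.univ.filter (fun i => z i = x i) with hS
    have hSne : S ≠ Finset.univ := by
      intro h
      apply hz
      funext i
      have : i ∈ S := h ▸ Finset.mem_univ i
      rw [hS, Finset.mem_filter] at this
      exact this.2
    have hmem : ∀ i, (z i = x i) ↔ i ∈ S := by
      intro i; rw [hS, Finset.mem_filter]; simp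
    have hcount := aux_count hG S hSne
    rw [← hE] at hcount
    have c1 : (∑ i, (1 - (G.degree i : ℝ)) * (if z i = x i then 1 else 0))
        = (S.card : ℝ) - ∑ i ∈ S, (G.degree i : ℝ) := by
      have : ∀ i, (1 - (G.degree i : ℝ)) * (if z i = x i then 1 else 0)
          = if i ∈ S then (1 - (G.degree i : ℝ)) else 0 := by
        intro i
        by_cases h : z i = x i
        · rw [if_pos h, if_pos ((hmem i).1 h)]; ring
        · rw [if_neg h, if_neg (fun hs => h ((hmem i).2 hs))]; ring
      simp_rw [this]
      rw [Finset.sum_ite_mem, Finset.univ_inter, Finset.sum_sub_distrib, Finset.sum_const,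
        nsmul_eq_mul, mul_one]
    have c2 : (∑ e ∈ E, (if z e.1 = x e.1 ∧ z e.2 = x e.2 then (1:ℝ) else 0))
        = ((∑ e ∈ E, if e.1 ∈ S ∧ e.2 ∈ S then (1:ℕ) else 0 : ℕ) : ℝ) := by
      push_cast
      apply Finset.sum_congr rfl; intro e _
      exact if_congr (and_congr (hmem e.1) (hmem e.2)) rfl rfl
    have c3 : ((S.card : ℕ) : ℝ) + ((∑ e ∈ E, if e.1 ∈ S ∧ e.2 ∈ S then (1:ℕ) else 0 : ℕ) : ℝ)
        ≤ ((∑ i ∈ S, G.degree i : ℕ) : ℝ) := by exact_mod_cast hcount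
    have c4 : ((∑ i ∈ S, G.degree i : ℕ) : ℝ) = ∑ i ∈ S, (G.degree i : ℝ) := by push_cast; rfl
    simp only [hF]
    rw [c1, c2]
    rw [c4] at c3
    linarith
  -- conclude
  rw [key, ← Finset.add_sum_erase _ _ (Finset.mem_univ x), hFx, mul_one]
  have hrest : ∑ z ∈ Finset.univ.erase x, q z * F z ≤ 0 := by
    apply Finset.sum_nonpos
    intro z hz
    exact mul_nonpos_iff.2 (Or.inl ⟨hq0 z, hFz z (Finset.ne_of_mem_erase hz)⟩)
  linarith
end

section
/- Let μ be tree-structured marginals on a finite product space realizable by some probability distribution, and x a fixed assignment with I(x;μ) > 0. Then for every q ∈ P(μ) with q(x_conditioning event) > 0, writing the coordinates as observed part x_o and hidden part x_h, the conditional probability satisfies q(x_h | x_o) ≥ I(x;μ) / (I(x;μ) + M), where M = max_{q'∈P(μ)} Σ_{z_h ≠ x_h} q'(z_h, x_o). -/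
/-!
If `q` has singleton and edge marginals `μ`, then `I(x;μ) = ∑_z c(z) q(z)`, where for the set
`A` of coordinates on which `z` agrees with `x`, `c(z) = ∑_{i ∈ A} (1 - dᵢ) + e(A)` and `e(A)` is
the number of edges inside `A`. In a tree `c(z) = |V| - e(V) = 1` when `A = V`, while for
`A ≠ V` we have `∑_{i ∈ A} dᵢ = 2 e(A) + e(A, Aᶜ)` and `|A| ≤ e(A) + e(A, Aᶜ)` (send each vertex
of `A` to the first edge of a shortest path towards a vertex outside `A`), so `c(z) ≤ 0`.
Hence `I(x;μ) ≤ q(x)`. The conditional probability is `q(x) / (q(x) + T)` with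
`T = ∑_{z_h ≠ x_h} q(z_h, x_o) ≤ M`, and `a / (a + t)` increases in `a` and decreases in `t`.
-/

open Finset

namespace SimpleGraph

variable {V : Type*} {G : SimpleGraph V}

theorem Connected.exists_adj_dist_lt (hG : G.Connected) {v r : V} (hvr : v ≠ r) :
    ∃ p, G.Adj v p ∧ G.dist p r < G.dist v r := by
  obtain ⟨w, hw⟩ := (hG v r).exists_walk_length_eq_dist
  cases w with
  | nil => exact absurd rfl hvr
  | cons hadj w' =>
    refine ⟨_, hadj, ?_⟩
    have := dist_le w'
    simp only [Walk.length_cons] at hw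
    omega

variable [Fintype V] [LinearOrder V] [DecidableRel G.Adj]

def sortedEdges (G : SimpleGraph V) [DecidableRel G.Adj] : Finset (V × V) :=
  {e | e.1 < e.2 ∧ G.Adj e.1 e.2}

theorem sum_adj_eq_sum_sortedEdges {M : Type*} [AddCommMonoid M] (f : V × V → M) :
    ∑ e with G.Adj e.1 e.2, f e = ∑ e ∈ G.sortedEdges, (f e + f e.swap) := by
  rw [sum_add_distrib, ← sum_filter_add_sum_filter_not _ (fun e => e.1 < e.2)]
  congr 1
  · rw [filter_filter]
    exact sum_congr (filter_congr fun e _ => and_comm) fun _ _ => rfl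
  · refine sum_bij' (fun e _ => e.swap) (fun e _ => e.swap) ?_ ?_ (by simp) (by simp) (by simp)
    · simp only [sortedEdges, mem_filter, mem_univ, true_and, Prod.fst_swap, Prod.snd_swap]
      rintro e ⟨hadj, hle⟩
      exact ⟨lt_of_le_of_ne (not_lt.1 hle) hadj.ne', hadj.symm⟩
    · simp only [sortedEdges, mem_filter, mem_univ, true_and, Prod.fst_swap, Prod.snd_swap]
      rintro e ⟨hlt, hadj⟩
      exact ⟨hadj.symm, hlt.not_gt⟩

theorem sum_degree_eq_sum_sortedEdges (S : Finset V) :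
    ∑ i ∈ S, G.degree i =
      ∑ e ∈ G.sortedEdges, ((if e.1 ∈ S then 1 else 0) + (if e.2 ∈ S then 1 else 0)) := by
  have := sum_adj_eq_sum_sortedEdges (G := G) fun e => if e.1 ∈ S then 1 else 0
  simp only [Prod.fst_swap] at this
  rw [← this, sum_filter, Fintype.sum_prod_type, ← Fintype.sum_ite_mem]
  refine sum_congr rfl fun i _ => ?_
  split_ifs <;>
    simp [← card_neighborFinset_eq_degree, neighborFinset_eq_filter]

theorem Connected.card_le_card_sortedEdges_meeting (hG : G.Connected) {S : Finset V}
    (hS : S ≠ univ) : #S ≤ #{e ∈ G.sortedEdges | e.1 ∈ S ∨ e.2 ∈ S} := by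
  obtain ⟨r, hr⟩ := not_forall.1 (mt eq_univ_iff_forall.2 hS)
  -- send `v ∈ S` to the first edge of a shortest path from `v` to a root `r ∉ S`; the map is
  -- injective because `dist · r` strictly decreases along such edges
  have hparent : ∀ v, ∃ p, v ∈ S → G.Adj v p ∧ G.dist p r < G.dist v r := fun v => by
    by_cases hv : v ∈ S
    · obtain ⟨p, hp⟩ := hG.exists_adj_dist_lt (v := v) (r := r) (by rintro rfl; exact hr hv)
      exact ⟨p, fun _ => hp⟩
    · exact ⟨v, fun h => absurd h hv⟩
  choose p hp using hparent
  refine card_le_card_of_injOn (fun v => if v < p v then (v, p v) else (p v, v)) ?_ ?_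
  · intro v hv
    obtain ⟨hadj, -⟩ := hp v hv
    simp only [mem_coe, sortedEdges, mem_filter, mem_univ, true_and]
    split_ifs with h
    · exact ⟨⟨h, hadj⟩, .inl hv⟩
    · exact ⟨⟨lt_of_le_of_ne (not_lt.1 h) hadj.ne', hadj.symm⟩, .inr hv⟩
  · intro u hu v hv huv
    have hdu := (hp u hu).2
    have hdv := (hp v hv).2
    dsimp only at huv
    split_ifs at huv <;> rw [Prod.mk.injEq] at huv
    · exact huv.1
    · exact absurd (huv.2 ▸ hdu) (not_lt.2 (huv.1 ▸ hdv).le)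
    · exact absurd (huv.1 ▸ hdu) (not_lt.2 (huv.2 ▸ hdv).le)
    · exact huv.2

theorem Connected.card_add_card_sortedEdges_within_le_sum_degree (hG : G.Connected)
    {S : Finset V} (hS : S ≠ univ) :
    #S + #{e ∈ G.sortedEdges | e.1 ∈ S ∧ e.2 ∈ S} ≤ ∑ i ∈ S, G.degree i := by
  have hcount : ∀ e : V × V, ((if e.1 ∈ S then 1 else 0) + (if e.2 ∈ S then 1 else 0)) =
      (if e.1 ∈ S ∨ e.2 ∈ S then 1 else 0) + (if e.1 ∈ S ∧ e.2 ∈ S then 1 else 0) := fun e => by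
    by_cases e.1 ∈ S <;> by_cases e.2 ∈ S <;> simp [*]
  rw [sum_degree_eq_sum_sortedEdges, sum_congr rfl fun e _ => hcount e, sum_add_distrib,
    ← card_filter, ← card_filter]
  exact Nat.add_le_add_right (hG.card_le_card_sortedEdges_meeting hS) _

theorem IsTree.card_sortedEdges_add_one (hG : G.IsTree) :
    #G.sortedEdges + 1 = Fintype.card V := by
  have hdeg := sum_degree_eq_sum_sortedEdges (G := G) univ
  simp only [mem_univ, if_true, sum_const, smul_eq_mul] at hdeg
  have := G.sum_degrees_eq_twice_card_edges
  rw [← hG.card_edgeFinset]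
  omega

theorem IsTree.sum_one_sub_degree_add_card_sortedEdges_within_le (hG : G.IsTree) (S : Finset V) :
    ∑ i ∈ S, (1 - (G.degree i : ℝ)) + #{e ∈ G.sortedEdges | e.1 ∈ S ∧ e.2 ∈ S} ≤
      if S = univ then 1 else 0 := by
  rw [sum_sub_distrib, sum_const, nsmul_one, ← Nat.cast_sum]
  split_ifs with hS
  · subst hS
    have hdeg := sum_degree_eq_sum_sortedEdges (G := G) univ
    have htree := hG.card_sortedEdges_add_one
    simp only [mem_univ, if_true, and_self, filter_true, sum_const, smul_eq_mul] at hdeg ⊢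
    rw [hdeg, card_univ, ← htree]
    push_cast
    linarith
  · have hcount : (#S : ℝ) + #{e ∈ G.sortedEdges | e.1 ∈ S ∧ e.2 ∈ S} ≤
        ∑ i ∈ S, G.degree i := by
      exact_mod_cast hG.connected.card_add_card_sortedEdges_within_le_sum_degree hS
    linarith

theorem IsTree.sum_marginals_le_apply {X : V → Type*} [∀ i, Fintype (X i)]
    [∀ i, DecidableEq (X i)] (hG : G.IsTree) (x : ∀ i, X i) {q : (∀ i, X i) → ℝ}
    (hq : ∀ z, 0 ≤ q z) :
    ∑ i, (1 - (G.degree i : ℝ)) * (∑ z, if z i = x i then q z else 0) +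
      ∑ e ∈ G.sortedEdges, (∑ z, if z e.1 = x e.1 ∧ z e.2 = x e.2 then q z else 0) ≤ q x := by
  set agree : (∀ i, X i) → Finset V := fun z => {i | z i = x i}
  have hexpand : ∑ i, (1 - (G.degree i : ℝ)) * (∑ z, if z i = x i then q z else 0) +
      ∑ e ∈ G.sortedEdges, (∑ z, if z e.1 = x e.1 ∧ z e.2 = x e.2 then q z else 0) =
      ∑ z, q z * (∑ i ∈ agree z, (1 - (G.degree i : ℝ)) +
        #{e ∈ G.sortedEdges | e.1 ∈ agree z ∧ e.2 ∈ agree z}) := by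
    simp only [agree, sum_filter, card_filter, mem_filter, mem_univ, true_and, Nat.cast_sum,
      Nat.cast_ite, Nat.cast_one, Nat.cast_zero, mul_add, mul_sum, mul_ite, mul_zero, mul_one,
      sum_add_distrib]
    rw [sum_comm, sum_comm (s := G.sortedEdges)]
    simp only [mul_comm]
  have hagree : ∀ z, agree z = univ ↔ z = x := fun z => by
    simp [agree, eq_univ_iff_forall, funext_iff]
  rw [hexpand]
  calc _ ≤ ∑ z, q z * if z = x then 1 else 0 := by
        gcongr with z
        · exact hq z
        · simpa only [hagree] using hG.sum_one_sub_degree_add_card_sortedEdges_within_le (agree z)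
    _ = q x := by simp

end SimpleGraph

theorem sum_ite_eq_add_sum_ite_and_ne {α M : Type*} [Fintype α] [DecidableEq α]
    [AddCommMonoid M] {P : α → Prop} [DecidablePred P] {a : α} (ha : P a) (f : α → M) :
    ∑ z, (if P z then f z else 0) = f a + ∑ z, if P z ∧ z ≠ a then f z else 0 := by
  simp only [← sum_filter]
  rw [← add_sum_erase _ _ (mem_filter.2 ⟨mem_univ a, ha⟩), ← filter_ne', filter_filter]

theorem div_add_le_div_add_of_le_of_le {K : Type*} [Field K] [LinearOrder K]
    [IsStrictOrderedRing K] {a b s t : K} (ha : 0 < a) (hab : a ≤ b) (hs : 0 ≤ s) (hst : s ≤ t) :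
    a / (a + t) ≤ b / (b + s) := by
  rw [div_le_div_iff₀ (by linarith) (by linarith)]
  nlinarith [mul_le_mul_of_nonneg_right hab hs, mul_le_mul_of_nonneg_left hst (ha.le.trans hab)]

theorem stmt7_general {n : ℕ} {X : Fin n → Type*} [∀ i, Fintype (X i)]
    [∀ i, DecidableEq (X i)]
    (G : SimpleGraph (Fin n)) [DecidableRel G.Adj] (hG : G.IsTree)
    (H : Set (Fin n)) [DecidablePred (· ∈ H)]
    (μ1 : ∀ i, X i → ℝ) (μ2 : ∀ i j, X i → X j → ℝ)
    (x : ∀ i, X i)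
    -- the (positive-part-free) functional I(x;μ)
    (I : ℝ)
    (hIdef : I = (∑ i, (1 - (G.degree i : ℝ)) * μ1 i (x i))
      + (∑ e ∈ Finset.univ.filter (fun e : Fin n × Fin n => e.1 < e.2 ∧ G.Adj e.1 e.2),
          μ2 e.1 e.2 (x e.1) (x e.2)))
    (hI : 0 < I)
    -- membership predicate for P(μ)
    (Pμ : ((∀ i, X i) → ℝ) → Prop)
    (hPμ : ∀ p, Pμ p ↔ ((∀ z, 0 ≤ p z) ∧ (∑ z, p z = 1) ∧
        (∀ i a, (∑ z, if z i = a then p z else 0) = μ1 i a) ∧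
        (∀ i j, G.Adj i j → ∀ a b, (∑ z, if z i = a ∧ z j = b then p z else 0) = μ2 i j a b)))
    -- M is the maximum of Σ_{z_h ≠ x_h} q'(z_h, x_o) over q' ∈ P(μ)
    (M : ℝ)
    (hM : IsGreatest { s : ℝ | ∃ q', Pμ q' ∧
        s = ∑ z, if ((∀ i, i ∉ H → z i = x i) ∧ z ≠ x) then q' z else 0 } M)
    (q : (∀ i, X i) → ℝ) (hq : Pμ q) :
    I / (I + M) ≤ q x / ∑ z, if (∀ i, i ∉ H → z i = x i) then q z else 0 := by
  obtain ⟨hq0, -, hq1, hq2⟩ := (hPμ q).1 hq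
  have hIq : I ≤ q x := by
    rw [hIdef]
    convert hG.sum_marginals_le_apply x hq0 using 2
    · exact sum_congr rfl fun i _ => by rw [hq1]
    · exact sum_congr rfl fun e he => (hq2 _ _ (mem_filter.1 he).2.2 _ _).symm
  rw [sum_ite_eq_add_sum_ite_and_ne (fun _ _ => rfl)]
  exact div_add_le_div_add_of_le_of_le hI hIq
    (sum_nonneg fun z _ => by split_ifs <;> simp [hq0]) (hM.2 ⟨q, hq, rfl⟩)

/-- Robust conditional lower bound: if `I(x;μ) > 0` then for every `q ∈ P(μ)` with
positive conditioning mass, `q(x_h | x_o) ≥ I(x;μ) / (I(x;μ) + M)` where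
`M = max_{q'∈P(μ)} Σ_{z_h ≠ x_h} q'(z_h, x_o)`. -/
theorem stmt7 {n : ℕ} {X : Fin n → Type*} [∀ i, Fintype (X i)] [∀ i, Nonempty (X i)]
    [∀ i, DecidableEq (X i)]
    (G : SimpleGraph (Fin n)) [DecidableRel G.Adj] (hG : G.IsTree)
    (H : Set (Fin n)) [DecidablePred (· ∈ H)]
    (μ1 : ∀ i, X i → ℝ) (μ2 : ∀ i j, X i → X j → ℝ)
    (x : ∀ i, X i)
    -- the (positive-part-free) functional I(x;μ)
    (I : ℝ)
    (hIdef : I = (∑ i, (1 - (G.degree i : ℝ)) * μ1 i (x i))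
      + (∑ e ∈ Finset.univ.filter (fun e : Fin n × Fin n => e.1 < e.2 ∧ G.Adj e.1 e.2),
          μ2 e.1 e.2 (x e.1) (x e.2)))
    (hI : 0 < I)
    -- membership predicate for P(μ)
    (Pμ : ((∀ i, X i) → ℝ) → Prop)
    (hPμ : ∀ p, Pμ p ↔ ((∀ z, 0 ≤ p z) ∧ (∑ z, p z = 1) ∧
        (∀ i a, (∑ z, if z i = a then p z else 0) = μ1 i a) ∧
        (∀ i j, G.Adj i j → ∀ a b, (∑ z, if z i = a ∧ z j = b then p z else 0) = μ2 i j a b)))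
    -- M is the maximum of Σ_{z_h ≠ x_h} q'(z_h, x_o) over q' ∈ P(μ)
    (M : ℝ)
    (hM : IsGreatest { s : ℝ | ∃ q', Pμ q' ∧
        s = ∑ z, if ((∀ i, i ∉ H → z i = x i) ∧ z ≠ x) then q' z else 0 } M)
    (q : (∀ i, X i) → ℝ) (hq : Pμ q)
    (hcond : 0 < ∑ z, if (∀ i, i ∉ H → z i = x i) then q z else 0) :
    I / (I + M) ≤ q x / ∑ z, if (∀ i, i ∉ H → z i = x i) then q z else 0 :=
  stmt7_general G hG H μ1 μ2 x I hIdef hI Pμ hPμ M hM q hq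
end

section
/- Let μ̃ be locally consistent pseudo-marginals on a tree G over sets X̄ᵢ: μ̃ᵢⱼ ≥ 0, Σ_{uⱼ} μ̃ᵢⱼ(uᵢ,uⱼ) = μ̃ᵢ(uᵢ) and Σ_{uᵢ} μ̃ᵢⱼ(uᵢ,uⱼ) = μ̃ⱼ(uⱼ) for all edges, with all singleton marginals strictly positive. Root the tree at r and define p(u) = μ̃_r(u_r) · Π_{i≠r} μ̃_{i,pa(i)}(uᵢ,u_{pa(i)}) / μ̃_{pa(i)}(u_{pa(i)}) for u ∈ Π X̄ᵢ. Then Σ_{u∈ΠX̄ᵢ} p(u) = Σ_{u_r∈X̄_r} μ̃_r(u_r), i.e., p sums to the partition function Z(μ̃). -/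
open Finset

/-!
By the second consistency equation, `x ↦ μ̃_{i,pa(i)}(x, y) / μ̃_{pa(i)}(y)` is a probability
distribution on `X̄ᵢ` for every `y`. Since `pa i < i`, the largest non-root vertex is a leaf, and
summing out its coordinate removes its factor from the product; peeling the vertices off in
decreasing order leaves `Σ_u μ̃_r(u_r)`. As all sums run over the full product `Π X̄ᵢ`, each
removed coordinate leaves a multiplicity `|X̄ᵢ|` behind, which cancels at the end.
-/

section

variable {ι : Type*} [Fintype ι] [DecidableEq ι] {X : ι → Type*} [∀ i, Fintype (X i)]

theorem Fintype.sum_sum_update_eq_card_smul {M : Type*} [AddCommMonoid M]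
    (Φ : (∀ k, X k) → M) (i : ι) :
    ∑ u, ∑ x : X i, Φ (Function.update u i x) = Fintype.card (X i) • ∑ u, Φ u := by
  let σ : Equiv.Perm ((∀ k, X k) × X i) :=
    Function.Involutive.toPerm (fun p => (Function.update p.1 i p.2, p.1 i))
      (fun p => by simp)
  calc ∑ u, ∑ x : X i, Φ (Function.update u i x) = ∑ p, Φ (σ p).1 :=
        (Fintype.sum_prod_type' _).symm
    _ = ∑ p : (∀ k, X k) × X i, Φ p.1 := Equiv.sum_comp σ (fun p => Φ p.1)
    _ = Fintype.card (X i) • ∑ u, Φ u := by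
        simp only [Fintype.sum_prod_type, sum_const, card_univ, smul_sum]

variable {R : Type*} [CommSemiring R]

theorem Fintype.card_mul_sum_mul_eq_sum {i j : ι} (hji : j ≠ i) {F : (∀ k, X k) → R}
    (hF : ∀ u x, F (Function.update u i x) = F u) {G : X i → X j → R}
    (hG : ∀ y, ∑ x, G x y = 1) :
    (Fintype.card (X i) : R) * ∑ u, F u * G (u i) (u j) = ∑ u, F u := by
  rw [← nsmul_eq_mul, ← Fintype.sum_sum_update_eq_card_smul]
  simp only [hF, Function.update_self, Function.update_of_ne hji, ← mul_sum, hG,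
    mul_one]

theorem Fintype.sum_apply_eq_prod_card_mul_sum (r : ι) (f : X r → R) :
    ∑ u : ∀ i, X i, f (u r) =
      (∏ i ∈ univ.erase r, (Fintype.card (X i) : R)) * ∑ x, f x := by
  classical
  rw [← Finset.sum_fiberwise' univ (fun u : ∀ i, X i => u r) f, mul_sum]
  refine Finset.sum_congr rfl fun x _ => ?_
  have hfiber := Fintype.card_filter_piFinset_eq_of_mem (fun i => (univ : Finset (X i))) r
    (mem_univ x)
  simp only [Fintype.piFinset_univ, Finset.card_univ] at hfiber
  rw [sum_const, hfiber, nsmul_eq_mul, Nat.cast_prod]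

variable [LinearOrder ι]

theorem prod_card_mul_sum_mul_prod_kernel (r : ι) (pa : ι → ι)
    (hpa : ∀ i, i ≠ r → pa i < i)
    (K : ∀ i, X i → X (pa i) → R) (hK : ∀ i, i ≠ r → ∀ y, ∑ x, K i x y = 1)
    (f : X r → R) {T : Finset ι} (hrT : r ∉ T) :
    (∏ i ∈ T, (Fintype.card (X i) : R)) *
        ∑ u : ∀ k, X k, f (u r) * ∏ i ∈ T, K i (u i) (u (pa i))
      = ∑ u : ∀ k, X k, f (u r) := by
  induction T using Finset.induction_on_max with
  | empty => simp
  | insert a s hlt ih =>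
    have har : a ≠ r := fun h => hrT (h ▸ mem_insert_self a s)
    have hrs : r ∉ s := fun h => hrT (mem_insert_of_mem h)
    have has : a ∉ s := fun h => (hlt a h).false
    -- `a` is a leaf: no vertex of `s` is `a` or has parent `a`
    have hF : ∀ (u : ∀ k, X k) x,
        f (Function.update u a x r) * ∏ t ∈ s, K t (Function.update u a x t)
          (Function.update u a x (pa t)) = f (u r) * ∏ t ∈ s, K t (u t) (u (pa t)) := by
      intro u x
      rw [Function.update_of_ne har.symm]
      refine congrArg _ (prod_congr rfl fun t ht => ?_)
      have hta : t < a := hlt t ht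
      have hpta : pa t < a := (hpa t (ne_of_mem_of_not_mem ht hrs)).trans hta
      rw [Function.update_of_ne hta.ne, Function.update_of_ne hpta.ne]
    calc (∏ i ∈ insert a s, (Fintype.card (X i) : R)) *
          ∑ u : ∀ k, X k, f (u r) * ∏ i ∈ insert a s, K i (u i) (u (pa i))
        = (∏ i ∈ s, (Fintype.card (X i) : R)) * ((Fintype.card (X a) : R) *
            ∑ u : ∀ k, X k,
              (f (u r) * ∏ i ∈ s, K i (u i) (u (pa i))) * K a (u a) (u (pa a))) := by
          simp only [prod_insert has, mul_sum]
          refine sum_congr rfl fun u _ => ?_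
          ring
      _ = ∑ u : ∀ k, X k, f (u r) := by
          rw [Fintype.card_mul_sum_mul_eq_sum (hpa a har).ne hF (hK a har), ih hrs]

end

theorem stmt11_general {n : ℕ} {X : Fin n → Type*} [∀ i, Fintype (X i)] [∀ i, Nonempty (X i)]
    (r : Fin n) (pa : Fin n → Fin n) (hpa : ∀ i, i ≠ r → pa i < i)
    (μs : ∀ i, X i → ℝ) (μe : ∀ i, X i → X (pa i) → ℝ)
    (hμs0 : ∀ i ui, 0 < μs i ui)
    (hcons2 : ∀ i, i ≠ r → ∀ uj, ∑ ui, μe i ui uj = μs (pa i) uj) :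
    ∑ u : ∀ i, X i,
        μs r (u r) * ∏ i ∈ Finset.univ.erase r, μe i (u i) (u (pa i)) / μs (pa i) (u (pa i))
      = ∑ ur, μs r ur := by
  have hK : ∀ i, i ≠ r → ∀ y, ∑ x, μe i x y / μs (pa i) y = 1 := fun i hi y => by
    rw [← sum_div, hcons2 i hi y, div_self (hμs0 _ y).ne']
  have hcard : ∏ i ∈ univ.erase r, (Fintype.card (X i) : ℝ) ≠ 0 :=
    prod_ne_zero_iff.mpr fun i _ => Nat.cast_ne_zero.mpr Fintype.card_ne_zero
  refine mul_left_cancel₀ hcard ?_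
  rw [prod_card_mul_sum_mul_prod_kernel r pa hpa (fun i x y => μe i x y / μs (pa i) y) hK
    (μs r) (notMem_erase r univ), Fintype.sum_apply_eq_prod_card_mul_sum]

/-- The tree-reparameterized product of locally consistent strictly positive
pseudo-marginals sums to the partition function `Z(μ̃) = Σ_{u_r} μ̃_r(u_r)`.
The rooted tree is encoded by a parent map `pa` compatible with a topological
order (`pa i < i` for `i ≠ r`). -/
theorem stmt11 {n : ℕ} {X : Fin n → Type*} [∀ i, Fintype (X i)] [∀ i, Nonempty (X i)]
    [∀ i, DecidableEq (X i)]
    (r : Fin n) (pa : Fin n → Fin n) (hpa : ∀ i, i ≠ r → pa i < i)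
    (μs : ∀ i, X i → ℝ) (μe : ∀ i, X i → X (pa i) → ℝ)
    (hμe0 : ∀ i ui uj, 0 ≤ μe i ui uj) (hμs0 : ∀ i ui, 0 < μs i ui)
    (hcons1 : ∀ i, i ≠ r → ∀ ui, ∑ uj, μe i ui uj = μs i ui)
    (hcons2 : ∀ i, i ≠ r → ∀ uj, ∑ ui, μe i ui uj = μs (pa i) uj) :
    ∑ u : ∀ i, X i,
        μs r (u r) * ∏ i ∈ Finset.univ.erase r, μe i (u i) (u (pa i)) / μs (pa i) (u (pa i))
      = ∑ ur, μs r ur :=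
  stmt11_general r pa hpa μs μe hμs0 hcons2
end

section
/- With the tree-reparameterized construction of the previous statement, p marginalizes correctly: for every edge (i,j)∈E and every (uᵢ,uⱼ)∈X̄ᵢ×X̄ⱼ, Σ_{z∈ΠX̄ₖ: zᵢ=uᵢ, zⱼ=uⱼ} p(z) = μ̃ᵢⱼ(uᵢ,uⱼ), and for every vertex i and uᵢ, Σ_{z: zᵢ=uᵢ} p(z) = μ̃ᵢ(uᵢ). -/
open Finset

section helpers
open Function
set_option linter.unusedSectionVars false

section aux
variable {n : ℕ} {X : Fin n → Type*} [∀ i, Fintype (X i)] [∀ i, DecidableEq (X i)]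

set_option maxHeartbeats 1000000 in
private lemma sum_out (κ : Fin n) (w : X κ) (f : (∀ m, X m) → ℝ) :
    ∑ z, f z = ∑ z, if z κ = w then ∑ a, f (Function.update z κ a) else 0 := by
  have lhs : ∑ z, f z = ∑ a : X κ, ∑ z ∈ univ.filter (fun z => z κ = a), f z :=
    (Finset.sum_fiberwise univ (fun z => z κ) f).symm
  rw [lhs]
  have rhs : ∑ z, (if z κ = w then ∑ a, f (Function.update z κ a) else 0)
      = ∑ z ∈ univ.filter (fun z => z κ = w), ∑ a, f (Function.update z κ a) := by
    rw [Finset.sum_filter]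
  rw [rhs, Finset.sum_comm]
  refine Finset.sum_congr rfl fun a _ => ?_
  refine (Finset.sum_nbij' (fun z => Function.update z κ a) (fun z => Function.update z κ w)
    ?_ ?_ ?_ ?_ ?_).symm
  · intro z hz; simp
  · intro z hz; simp
  · intro z hz
    simp only [mem_filter, mem_univ, true_and] at hz
    simp only [Function.update_idem, ← hz, Function.update_eq_self]
  · intro z hz
    simp only [mem_filter, mem_univ, true_and] at hz
    simp only [Function.update_idem, ← hz, Function.update_eq_self]
  · intro z hz; rfl

variable (r : Fin n) (pa : Fin n → Fin n) (μs : ∀ i, X i → ℝ) (μe : ∀ i, X i → X (pa i) → ℝ)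

private noncomputable def Ffun (k : ℕ) (u : ∀ i, X i) : ℝ :=
  μs r (u r) * ∏ i ∈ (Finset.univ.erase r).filter (fun i : Fin n => (i : ℕ) < k),
    (μe i (u i) (u (pa i)) / μs (pa i) (u (pa i)))

private lemma Ffun_indep (hr0 : (r : ℕ) = 0) (hpa : ∀ i, i ≠ r → pa i < i)
    (k : ℕ) (hk1 : 1 ≤ k) (κ : Fin n) (hκ : k ≤ (κ : ℕ)) (z : ∀ i, X i) (a : X κ) :
    Ffun r pa μs μe k (Function.update z κ a) = Ffun r pa μs μe k z := by
  unfold Ffun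
  have hrκ : r ≠ κ := by
    intro h; rw [← h] at hκ; omega
  rw [Function.update_of_ne hrκ]
  congr 1
  refine Finset.prod_congr rfl fun i hi => ?_
  simp only [mem_filter, mem_erase] at hi
  have hi1 : i ≠ κ := by intro h; rw [h] at hi; omega
  have hi2 : pa i ≠ κ := by
    intro h
    have := hpa i hi.1.1
    rw [Fin.lt_def, h] at this
    omega
  rw [Function.update_of_ne hi1, Function.update_of_ne hi2]

private lemma Ffun_succ (hr0 : (r : ℕ) = 0) (k : ℕ) (hk1 : 1 ≤ k) (hkn : k < n)
    (z : ∀ i, X i) :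
    Ffun r pa μs μe (k + 1) z = Ffun r pa μs μe k z *
      (μe ⟨k, hkn⟩ (z ⟨k, hkn⟩) (z (pa ⟨k, hkn⟩)) / μs (pa ⟨k, hkn⟩) (z (pa ⟨k, hkn⟩))) := by
  set κ : Fin n := ⟨k, hkn⟩ with hκdef
  have hκr : κ ≠ r := by
    intro h; rw [Fin.ext_iff, hκdef, hr0] at h; simp at h; omega
  have hκval : (κ : ℕ) = k := rfl
  have hset : (Finset.univ.erase r).filter (fun i : Fin n => (i : ℕ) < k + 1)
      = insert κ ((Finset.univ.erase r).filter (fun i : Fin n => (i : ℕ) < k)) := by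
    ext i
    simp only [mem_filter, mem_erase, mem_insert, mem_univ, true_and, and_true]
    constructor
    · rintro ⟨hir, hik⟩
      rcases Nat.lt_or_ge (i : ℕ) k with h | h
      · exact Or.inr ⟨hir, h⟩
      · exact Or.inl (Fin.ext (by omega))
    · rintro (h | ⟨hir, hik⟩)
      · subst h; exact ⟨hκr, by omega⟩
      · exact ⟨hir, by omega⟩
  have hκnot : κ ∉ (Finset.univ.erase r).filter (fun i : Fin n => (i : ℕ) < k) := by
    simp [hκdef]
  unfold Ffun
  rw [hset, Finset.prod_insert hκnot]
  ring

set_option maxHeartbeats 4000000 in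
private lemma Blem (hr0 : (r : ℕ) = 0) (hpa : ∀ i, i ≠ r → pa i < i)
    (hμs0 : ∀ i ui, 0 < μs i ui)
    (hcons1 : ∀ i, i ≠ r → ∀ ui, ∑ uj, μe i ui uj = μs i ui)
    (hcons2 : ∀ i, i ≠ r → ∀ uj, ∑ ui, μe i ui uj = μs (pa i) uj) :
    ∀ k, 1 ≤ k → k ≤ n → ∀ j : Fin n, (j : ℕ) < k → ∀ u : ∀ m, X m,
      (∑ z, if (z j = u j ∧ ∀ m : Fin n, k ≤ (m : ℕ) → z m = u m)
        then Ffun r pa μs μe k z else 0) = μs j (u j) := by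
  intro k hk1
  induction k, hk1 using Nat.le_induction with
  | base =>
    intro hn j hj u
    have hjr : j = r := Fin.ext (by omega)
    have hiff : ∀ z : ∀ m, X m,
        (z j = u j ∧ ∀ m : Fin n, 1 ≤ (m : ℕ) → z m = u m) ↔ z = u := by
      intro z
      constructor
      · rintro ⟨h1, h2⟩
        funext m
        rcases Nat.eq_zero_or_pos (m : ℕ) with h | h
        · have hm : m = j := Fin.ext (by omega)
          rw [hm]; exact h1
        · exact h2 m h
      · rintro rfl; exact ⟨rfl, fun _ _ => rfl⟩
    simp only [hiff]
    rw [Finset.sum_ite_eq' Finset.univ u (fun z => Ffun r pa μs μe 1 z)]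
    simp only [Finset.mem_univ, if_true]
    have hempty : (Finset.univ.erase r).filter (fun i : Fin n => (i : ℕ) < 1) = ∅ := by
      ext i
      simp only [mem_filter, mem_erase, mem_univ, true_and, and_true,
        Finset.notMem_empty, iff_false, not_and]
      intro hir hi1
      exact hir (Fin.ext (by omega))
    rw [hjr]
    unfold Ffun
    rw [hempty, Finset.prod_empty, mul_one]
  | succ k hk1 IH =>
    intro hkn j hj u
    have hkn' : k < n := by omega
    set κ : Fin n := ⟨k, hkn'⟩ with hκdef
    have hκval : (κ : ℕ) = k := rfl
    have hκr : κ ≠ r := by intro h; rw [Fin.ext_iff] at h; omega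
    have hpaκ : (pa κ : ℕ) < k := by
      have := hpa κ hκr; rw [Fin.lt_def] at this; omega
    have hpaκκ : pa κ ≠ κ := by intro h; rw [h] at hpaκ; omega
    by_cases hjκ : j = κ
    · subst hjκ
      have step1 : ∀ z : ∀ m, X m,
          (if (z κ = u κ ∧ ∀ m : Fin n, k + 1 ≤ (m : ℕ) → z m = u m)
            then Ffun r pa μs μe (k + 1) z else 0)
          = ∑ b : X (pa κ), (μe κ (u κ) b / μs (pa κ) b) *
              (if (z (pa κ) = Function.update u (pa κ) b (pa κ)
                  ∧ ∀ m : Fin n, k ≤ (m : ℕ) → z m = Function.update u (pa κ) b m)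
                then Ffun r pa μs μe k z else 0) := by
        intro z
        by_cases hC : z κ = u κ ∧ ∀ m : Fin n, k + 1 ≤ (m : ℕ) → z m = u m
        · rw [if_pos hC]
          obtain ⟨hC1, hC2⟩ := hC
          have hiff : ∀ b : X (pa κ),
              (z (pa κ) = Function.update u (pa κ) b (pa κ)
                ∧ ∀ m : Fin n, k ≤ (m : ℕ) → z m = Function.update u (pa κ) b m)
              ↔ z (pa κ) = b := by
            intro b
            rw [Function.update_self]
            constructor
            · exact fun h => h.1
            · intro hb
              refine ⟨hb, fun m hm => ?_⟩
              have hmpa : m ≠ pa κ := by intro h; rw [h] at hm; omega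
              rw [Function.update_of_ne hmpa]
              rcases Nat.eq_or_lt_of_le hm with h | h
              · have hmκ : m = κ := Fin.ext (by omega)
                rw [hmκ]; exact hC1
              · exact hC2 m (by omega)
          simp only [hiff, mul_ite, mul_zero]
          rw [Finset.sum_ite_eq Finset.univ (z (pa κ))
            (fun b => μe κ (u κ) b / μs (pa κ) b * Ffun r pa μs μe k z)]
          simp only [Finset.mem_univ, if_true]
          rw [Ffun_succ r pa μs μe hr0 k hk1 hkn' z]
          rw [show (⟨k, hkn'⟩ : Fin n) = κ from rfl]
          rw [hC1]
          ring
        · rw [if_neg hC]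
          symm
          refine Finset.sum_eq_zero fun b _ => ?_
          rw [if_neg, mul_zero]
          rintro ⟨h1, h2⟩
          apply hC
          constructor
          · have h3 := h2 κ (by omega)
            rwa [Function.update_of_ne (Ne.symm hpaκκ)] at h3
          · intro m hm
            have hmpa : m ≠ pa κ := by intro h; rw [h] at hm; omega
            have h3 := h2 m (by omega)
            rwa [Function.update_of_ne hmpa] at h3
      calc (∑ z, if (z κ = u κ ∧ ∀ m : Fin n, k + 1 ≤ (m : ℕ) → z m = u m)
              then Ffun r pa μs μe (k + 1) z else 0)
          = ∑ z : ∀ m, X m, ∑ b : X (pa κ), (μe κ (u κ) b / μs (pa κ) b) *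
              (if (z (pa κ) = Function.update u (pa κ) b (pa κ)
                  ∧ ∀ m : Fin n, k ≤ (m : ℕ) → z m = Function.update u (pa κ) b m)
                then Ffun r pa μs μe k z else 0) :=
            Finset.sum_congr rfl fun z _ => step1 z
        _ = ∑ b : X (pa κ), (μe κ (u κ) b / μs (pa κ) b) *
              ∑ z : ∀ m, X m, (if (z (pa κ) = Function.update u (pa κ) b (pa κ)
                  ∧ ∀ m : Fin n, k ≤ (m : ℕ) → z m = Function.update u (pa κ) b m)
                then Ffun r pa μs μe k z else 0) := by
            rw [Finset.sum_comm]
            exact Finset.sum_congr rfl fun b _ => (Finset.mul_sum _ _ _).symm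
        _ = ∑ b : X (pa κ), (μe κ (u κ) b / μs (pa κ) b) * μs (pa κ) b := by
            refine Finset.sum_congr rfl fun b _ => ?_
            rw [IH (by omega) (pa κ) (by omega) (Function.update u (pa κ) b),
              Function.update_self]
        _ = ∑ b : X (pa κ), μe κ (u κ) b := by
            refine Finset.sum_congr rfl fun b _ => ?_
            rw [div_mul_cancel₀ _ (ne_of_gt (hμs0 (pa κ) b))]
        _ = μs κ (u κ) := hcons1 κ hκr (u κ)
    · have hjk : (j : ℕ) < k := by
        rcases Nat.lt_or_ge (j : ℕ) k with h | h
        · exact h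
        · exact absurd (Fin.ext (show (j : ℕ) = (κ : ℕ) by omega)) hjκ
      rw [sum_out κ (u κ)]
      have step2 : ∀ z : ∀ m, X m,
          (if z κ = u κ then
            ∑ a : X κ, (if ((Function.update z κ a) j = u j
                ∧ ∀ m : Fin n, k + 1 ≤ (m : ℕ) → Function.update z κ a m = u m)
              then Ffun r pa μs μe (k + 1) (Function.update z κ a) else 0)
          else 0)
          = (if (z j = u j ∧ ∀ m : Fin n, k ≤ (m : ℕ) → z m = u m)
              then Ffun r pa μs μe k z else 0) := by
        intro z
        by_cases hzκ : z κ = u κ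
        · rw [if_pos hzκ]
          have hiff2 : ∀ a : X κ,
              ((Function.update z κ a) j = u j
                ∧ ∀ m : Fin n, k + 1 ≤ (m : ℕ) → Function.update z κ a m = u m)
              ↔ (z j = u j ∧ ∀ m : Fin n, k + 1 ≤ (m : ℕ) → z m = u m) := by
            intro a
            rw [Function.update_of_ne hjκ]
            refine and_congr_right fun _ => forall_congr' fun m => ?_
            constructor <;> intro h hm
            · have hmκ : m ≠ κ := by intro e; rw [e] at hm; omega
              have h3 := h hm
              rwa [Function.update_of_ne hmκ] at h3
            · have hmκ : m ≠ κ := by intro e; rw [e] at hm; omega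
              rw [Function.update_of_ne hmκ]
              exact h hm
          have hfe : ∀ a : X κ, Ffun r pa μs μe (k + 1) (Function.update z κ a)
              = Ffun r pa μs μe k z * (μe κ a (z (pa κ)) / μs (pa κ) (z (pa κ))) := by
            intro a
            rw [Ffun_succ r pa μs μe hr0 k hk1 hkn' (Function.update z κ a)]
            rw [show (⟨k, hkn'⟩ : Fin n) = κ from rfl]
            rw [Ffun_indep r pa μs μe hr0 hpa k hk1 κ (le_of_eq hκval.symm) z a]
            rw [Function.update_self, Function.update_of_ne hpaκκ]
          by_cases hC : z j = u j ∧ ∀ m : Fin n, k + 1 ≤ (m : ℕ) → z m = u m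
          · simp only [hiff2, if_pos hC, hfe]
            rw [← Finset.mul_sum, ← Finset.sum_div, hcons2 κ hκr (z (pa κ)),
              div_self (ne_of_gt (hμs0 (pa κ) (z (pa κ)))), mul_one]
            rw [if_pos]
            refine ⟨hC.1, fun m hm => ?_⟩
            rcases Nat.eq_or_lt_of_le hm with h | h
            · have hmκ : m = κ := Fin.ext (by omega)
              rw [hmκ]; exact hzκ
            · exact hC.2 m (by omega)
          · simp only [hiff2, if_neg hC]
            rw [Finset.sum_const_zero, if_neg]
            intro h
            exact hC ⟨h.1, fun m hm => h.2 m (by omega)⟩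
        · rw [if_neg hzκ]
          symm
          rw [if_neg]
          rintro ⟨h1, h2⟩
          exact hzκ (h2 κ (by omega))
      rw [Finset.sum_congr rfl fun z _ => step2 z]
      exact IH (by omega) j hjk u

set_option maxHeartbeats 4000000 in
private lemma Elem (hr0 : (r : ℕ) = 0) (hpa : ∀ i, i ≠ r → pa i < i)
    (hμs0 : ∀ i ui, 0 < μs i ui)
    (hcons1 : ∀ i, i ≠ r → ∀ ui, ∑ uj, μe i ui uj = μs i ui)
    (hcons2 : ∀ i, i ≠ r → ∀ uj, ∑ ui, μe i ui uj = μs (pa i) uj)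
    (i : Fin n) (hir : i ≠ r) :
    ∀ k, (i : ℕ) + 1 ≤ k → k ≤ n → ∀ u : ∀ m, X m,
      (∑ z, if (z i = u i ∧ z (pa i) = u (pa i) ∧ ∀ m : Fin n, k ≤ (m : ℕ) → z m = u m)
        then Ffun r pa μs μe k z else 0) = μe i (u i) (u (pa i)) := by
  have hi1 : 1 ≤ (i : ℕ) := by
    rcases Nat.eq_zero_or_pos (i : ℕ) with h | h
    · exact absurd (Fin.ext (by omega)) hir
    · exact h
  have hpai : (pa i : ℕ) < (i : ℕ) := by
    have := hpa i hir; rw [Fin.lt_def] at this; omega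
  have hpaii : pa i ≠ i := by intro h; rw [h] at hpai; omega
  intro k hk1
  induction k, hk1 using Nat.le_induction with
  | base =>
    intro hkn u
    have hin : (i : ℕ) < n := by omega
    have himk : (⟨(i : ℕ), hin⟩ : Fin n) = i := Fin.ext rfl
    have hfs : ∀ z : ∀ m, X m, Ffun r pa μs μe ((i : ℕ) + 1) z
        = Ffun r pa μs μe (i : ℕ) z * (μe i (z i) (z (pa i)) / μs (pa i) (z (pa i))) := by
      intro z
      rw [Ffun_succ r pa μs μe hr0 (i : ℕ) hi1 hin z, himk]
    have step : ∀ z : ∀ m, X m,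
        (if (z i = u i ∧ z (pa i) = u (pa i)
              ∧ ∀ m : Fin n, (i : ℕ) + 1 ≤ (m : ℕ) → z m = u m)
          then Ffun r pa μs μe ((i : ℕ) + 1) z else 0)
        = (μe i (u i) (u (pa i)) / μs (pa i) (u (pa i))) *
          (if (z (pa i) = u (pa i) ∧ ∀ m : Fin n, (i : ℕ) ≤ (m : ℕ) → z m = u m)
            then Ffun r pa μs μe (i : ℕ) z else 0) := by
      intro z
      by_cases hC : z i = u i ∧ z (pa i) = u (pa i)
          ∧ ∀ m : Fin n, (i : ℕ) + 1 ≤ (m : ℕ) → z m = u m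
      · obtain ⟨h1, h2, h3⟩ := hC
        have hc2 : z (pa i) = u (pa i) ∧ ∀ m : Fin n, (i : ℕ) ≤ (m : ℕ) → z m = u m := by
          refine ⟨h2, fun m hm => ?_⟩
          rcases Nat.eq_or_lt_of_le hm with h | h
          · have hmi : m = i := Fin.ext (by omega)
            rw [hmi]; exact h1
          · exact h3 m (by omega)
        rw [if_pos ⟨h1, h2, h3⟩, if_pos hc2, hfs z, h1, h2]
        ring
      · rw [if_neg hC]
        by_cases hc2 : z (pa i) = u (pa i) ∧ ∀ m : Fin n, (i : ℕ) ≤ (m : ℕ) → z m = u m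
        · exfalso
          exact hC ⟨hc2.2 i (le_refl _), hc2.1, fun m hm => hc2.2 m (by omega)⟩
        · rw [if_neg hc2, mul_zero]
    rw [Finset.sum_congr rfl fun z _ => step z, ← Finset.mul_sum]
    rw [Blem r pa μs μe hr0 hpa hμs0 hcons1 hcons2 (i : ℕ) hi1 (by omega) (pa i)
      (by omega) u]
    rw [div_mul_cancel₀ _ (ne_of_gt (hμs0 (pa i) (u (pa i))))]
  | succ k hk1 IH =>
    intro hkn u
    have hkn' : k < n := by omega
    set κ : Fin n := ⟨k, hkn'⟩ with hκdef
    have hκval : (κ : ℕ) = k := rfl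
    have hκr : κ ≠ r := by intro h; rw [Fin.ext_iff] at h; omega
    have hκ1 : 1 ≤ k := by omega
    have hpaκ : (pa κ : ℕ) < k := by
      have := hpa κ hκr; rw [Fin.lt_def] at this; omega
    have hpaκκ : pa κ ≠ κ := by intro h; rw [h] at hpaκ; omega
    have hiκ : i ≠ κ := by intro h; rw [Fin.ext_iff] at h; omega
    have hpaiκ : pa i ≠ κ := by intro h; rw [Fin.ext_iff] at h; omega
    rw [sum_out κ (u κ)]
    have step2 : ∀ z : ∀ m, X m,
        (if z κ = u κ then
          ∑ a : X κ, (if ((Function.update z κ a) i = u i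
              ∧ (Function.update z κ a) (pa i) = u (pa i)
              ∧ ∀ m : Fin n, k + 1 ≤ (m : ℕ) → Function.update z κ a m = u m)
            then Ffun r pa μs μe (k + 1) (Function.update z κ a) else 0)
        else 0)
        = (if (z i = u i ∧ z (pa i) = u (pa i) ∧ ∀ m : Fin n, k ≤ (m : ℕ) → z m = u m)
            then Ffun r pa μs μe k z else 0) := by
      intro z
      by_cases hzκ : z κ = u κ
      · rw [if_pos hzκ]
        have hiff2 : ∀ a : X κ,
            ((Function.update z κ a) i = u i
              ∧ (Function.update z κ a) (pa i) = u (pa i)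
              ∧ ∀ m : Fin n, k + 1 ≤ (m : ℕ) → Function.update z κ a m = u m)
            ↔ (z i = u i ∧ z (pa i) = u (pa i)
              ∧ ∀ m : Fin n, k + 1 ≤ (m : ℕ) → z m = u m) := by
          intro a
          rw [Function.update_of_ne hiκ, Function.update_of_ne hpaiκ]
          refine and_congr_right fun _ => and_congr_right fun _ =>
            forall_congr' fun m => ?_
          constructor <;> intro h hm
          · have hmκ : m ≠ κ := by intro e; rw [e] at hm; omega
            have h3 := h hm
            rwa [Function.update_of_ne hmκ] at h3
          · have hmκ : m ≠ κ := by intro e; rw [e] at hm; omega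
            rw [Function.update_of_ne hmκ]
            exact h hm
        have hfe : ∀ a : X κ, Ffun r pa μs μe (k + 1) (Function.update z κ a)
            = Ffun r pa μs μe k z * (μe κ a (z (pa κ)) / μs (pa κ) (z (pa κ))) := by
          intro a
          rw [Ffun_succ r pa μs μe hr0 k hκ1 hkn' (Function.update z κ a)]
          rw [show (⟨k, hkn'⟩ : Fin n) = κ from rfl]
          rw [Ffun_indep r pa μs μe hr0 hpa k hκ1 κ (le_of_eq hκval.symm) z a]
          rw [Function.update_self, Function.update_of_ne hpaκκ]
        by_cases hC : z i = u i ∧ z (pa i) = u (pa i)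
            ∧ ∀ m : Fin n, k + 1 ≤ (m : ℕ) → z m = u m
        · simp only [hiff2, if_pos hC, hfe]
          rw [← Finset.mul_sum, ← Finset.sum_div, hcons2 κ hκr (z (pa κ)),
            div_self (ne_of_gt (hμs0 (pa κ) (z (pa κ)))), mul_one]
          rw [if_pos]
          refine ⟨hC.1, hC.2.1, fun m hm => ?_⟩
          rcases Nat.eq_or_lt_of_le hm with h | h
          · have hmκ : m = κ := Fin.ext (by omega)
            rw [hmκ]; exact hzκ
          · exact hC.2.2 m (by omega)
        · simp only [hiff2, if_neg hC]
          rw [Finset.sum_const_zero, if_neg]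
          intro h
          exact hC ⟨h.1, h.2.1, fun m hm => h.2.2 m (by omega)⟩
      · rw [if_neg hzκ]
        symm
        rw [if_neg]
        rintro ⟨h1, h2, h3⟩
        exact hzκ (h3 κ (by omega))
    rw [Finset.sum_congr rfl fun z _ => step2 z]
    exact IH (by omega) u

end aux

set_option maxHeartbeats 1000000 in
/-- The tree-reparameterized construction marginalizes correctly: its pairwise marginals
along tree edges `(i, pa i)` are `μ̃_{i,pa(i)}` and its singleton marginals are `μ̃ᵢ`. -/
theorem stmt12 {n : ℕ} {X : Fin n → Type*} [∀ i, Fintype (X i)] [∀ i, Nonempty (X i)]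
    [∀ i, DecidableEq (X i)]
    (r : Fin n) (pa : Fin n → Fin n) (hpa : ∀ i, i ≠ r → pa i < i)
    (μs : ∀ i, X i → ℝ) (μe : ∀ i, X i → X (pa i) → ℝ)
    (hμe0 : ∀ i ui uj, 0 ≤ μe i ui uj) (hμs0 : ∀ i ui, 0 < μs i ui)
    (hcons1 : ∀ i, i ≠ r → ∀ ui, ∑ uj, μe i ui uj = μs i ui)
    (hcons2 : ∀ i, i ≠ r → ∀ uj, ∑ ui, μe i ui uj = μs (pa i) uj)
    (p : (∀ i, X i) → ℝ)
    (hpdef : ∀ u, p u = μs r (u r)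
        * ∏ i ∈ Finset.univ.erase r, μe i (u i) (u (pa i)) / μs (pa i) (u (pa i))) :
    (∀ i, i ≠ r → ∀ (ui : X i) (uj : X (pa i)),
        (∑ z, if z i = ui ∧ z (pa i) = uj then p z else 0) = μe i ui uj)
    ∧ (∀ (i : Fin n) (ui : X i),
        (∑ z, if z i = ui then p z else 0) = μs i ui) := by
  have hn : 0 < n := r.pos
  have hr0 : (r : ℕ) = 0 := by
    by_contra h
    have h0 : (⟨0, hn⟩ : Fin n) ≠ r := by
      intro he; apply h; rw [← he]
    have := hpa ⟨0, hn⟩ h0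
    rw [Fin.lt_def] at this
    have h00 : ((⟨0, hn⟩ : Fin n) : ℕ) = 0 := rfl
    omega
  have hpF : ∀ z : ∀ i, X i, p z = Ffun r pa μs μe n z := by
    intro z
    rw [hpdef]
    unfold Ffun
    congr 1
    rw [Finset.filter_true_of_mem]
    intro i _
    exact i.isLt
  obtain ⟨u0⟩ : Nonempty (∀ m, X m) := ⟨fun m => Classical.arbitrary _⟩
  constructor
  · intro i hi ui uj
    have hpaii : pa i ≠ i := ne_of_lt (hpa i hi)
    set u : ∀ m, X m := Function.update (Function.update u0 (pa i) uj) i ui with hu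
    have hui : u i = ui := Function.update_self i ui _
    have huj : u (pa i) = uj := by
      rw [hu, Function.update_of_ne hpaii, Function.update_self]
    have h1 : (i : ℕ) + 1 ≤ n := i.isLt
    have key := Elem r pa μs μe hr0 hpa hμs0 hcons1 hcons2 i hi n h1 le_rfl u
    rw [hui, huj] at key
    rw [← key]
    refine Finset.sum_congr rfl fun z _ => ?_
    rw [hpF z]
    refine if_congr ?_ rfl rfl
    constructor
    · rintro ⟨ha, hb⟩; exact ⟨ha, hb, fun m hm => absurd m.isLt (by omega)⟩
    · rintro ⟨ha, hb, _⟩; exact ⟨ha, hb⟩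
  · intro i ui
    set u : ∀ m, X m := Function.update u0 i ui with hu
    have hui : u i = ui := Function.update_self i ui u0
    have key := Blem r pa μs μe hr0 hpa hμs0 hcons1 hcons2 n hn le_rfl i i.isLt u
    rw [hui] at key
    rw [← key]
    refine Finset.sum_congr rfl fun z _ => ?_
    rw [hpF z]
    refine if_congr ?_ rfl rfl
    constructor
    · intro ha; exact ⟨ha, fun m hm => absurd m.isLt (by omega)⟩
    · rintro ⟨ha, _⟩; exact ha

end helpers
end

section
/- Suppose a tree-decomposable function λ ≥ 0 pointwise satisfies λ(x) ≥ 1 for a fixed assignment x, and the min-marginal reparameterization identity holds. Then for any distribution p with tree marginals μ, E_p[λ(X)] ≥ min_{(i,j)∈E} μᵢⱼ(xᵢ,xⱼ). (Key step: the expectation is a nonnegative combination of terms μ_r(x_r), μ_{i,pa(i)}(xᵢ,x_{pa(i)}) whose coefficients sum to λ(x) ≥ 1, hence it dominates the smallest such marginal.) -/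
open Finset

/-- If a tree-decomposable `λ ≥ 0` satisfies `λ(x) ≥ 1` and the min-marginal
reparameterization identity holds, then `E_p[λ] ≥ min_{(i,pa(i))∈E} μ_{i,pa(i)}(xᵢ,x_{pa(i)})`. -/
theorem stmt15 {n : ℕ} {X : Fin n → Type*} [∀ i, Fintype (X i)] [∀ i, Nonempty (X i)]
    [∀ i, DecidableEq (X i)]
    (r : Fin n) (pa : Fin n → Fin n) (hpa : ∀ i, i ≠ r → pa i < i)
    (lr : X r → ℝ) (ls : ∀ i, X i → ℝ) (le : ∀ i, X i → X (pa i) → ℝ)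
    (lam : (∀ i, X i) → ℝ)
    (hlam : ∀ z, lam z = lr (z r)
        + ∑ i ∈ Finset.univ.erase r, (le i (z i) (z (pa i)) + ls i (z i)))
    (lb1 : ∀ i, X i → ℝ) (lb2 : ∀ i, X i → X (pa i) → ℝ)
    (hlb1 : ∀ (i : Fin n) (xi : X i),
        IsLeast {v : ℝ | ∃ z, z i = xi ∧ v = lam z} (lb1 i xi))
    (hlb2 : ∀ (i : Fin n) (xi : X i) (xj : X (pa i)),
        IsLeast {v : ℝ | ∃ z, z i = xi ∧ z (pa i) = xj ∧ v = lam z} (lb2 i xi xj))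
    (hrepar : ∀ z, lam z = lb1 r (z r)
        + ∑ i ∈ Finset.univ.erase r, (lb2 i (z i) (z (pa i)) - lb1 (pa i) (z (pa i))))
    (hnonneg : ∀ z, 0 ≤ lam z)
    (x : ∀ i, X i) (hx1 : 1 ≤ lam x)
    (p : (∀ i, X i) → ℝ) (hp0 : ∀ z, 0 ≤ p z) (hp1 : ∑ z, p z = 1)
    (hEne : (Finset.univ.erase r).Nonempty) :
    (Finset.univ.erase r).inf' hEne
        (fun i => ∑ z, if z i = x i ∧ z (pa i) = x (pa i) then p z else 0)
      ≤ ∑ z, p z * lam z := by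
  classical
  set E : Finset (Fin n) := Finset.univ.erase r with hEdef
  set μ : Fin n → ℝ :=
    fun i => ∑ z, if z i = x i ∧ z (pa i) = x (pa i) then p z else 0 with hμdef
  set μr : ℝ := ∑ z, if z r = x r then p z else 0 with hμrdef
  set a : ℝ := lb1 r (x r) with hadef
  set c : Fin n → ℝ :=
    fun i => lb2 i (x i) (x (pa i)) - lb1 (pa i) (x (pa i)) with hcdef
  set m : ℝ := E.inf' hEne μ with hmdef
  -- basic facts about lb1, lb2
  have hlb1nn : ∀ (i : Fin n) (xi : X i), 0 ≤ lb1 i xi := by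
    intro i xi
    obtain ⟨z, _, hz⟩ := (hlb1 i xi).1
    rw [hz]; exact hnonneg z
  have hlb2ge : ∀ (i : Fin n) (xi : X i) (xj : X (pa i)),
      lb1 (pa i) xj ≤ lb2 i xi xj := by
    intro i xi xj
    obtain ⟨z, hzi, hzj, hz⟩ := (hlb2 i xi xj).1
    rw [hz]
    exact (hlb1 (pa i) xj).2 ⟨z, hzj, rfl⟩
  have ha : 0 ≤ a := hlb1nn r (x r)
  have hc : ∀ i, 0 ≤ c i := fun i => sub_nonneg.2 (hlb2ge i (x i) (x (pa i)))
  -- pointwise key inequality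
  have key : ∀ z, (if z r = x r then a else 0)
      + ∑ i ∈ E, (if z i = x i ∧ z (pa i) = x (pa i) then c i else 0) ≤ lam z := by
    intro z
    rw [hrepar z]
    refine add_le_add ?_ (Finset.sum_le_sum fun i _ => ?_)
    · split_ifs with h
      · rw [hadef, h]
      · exact hlb1nn r (z r)
    · split_ifs with h
      · obtain ⟨h1, h2⟩ := h
        rw [hcdef]; rw [h1, h2]
      · exact sub_nonneg.2 (hlb2ge i (z i) (z (pa i)))
  -- expectation dominates the combination
  have hE1 : a * μr + ∑ i ∈ E, c i * μ i ≤ ∑ z, p z * lam z := by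
    have step1 : a * μr = ∑ z, p z * (if z r = x r then a else 0) := by
      rw [hμrdef, Finset.mul_sum]
      exact Finset.sum_congr rfl fun z _ => by split_ifs <;> ring
    have step2 : ∑ i ∈ E, c i * μ i
        = ∑ z, ∑ i ∈ E, p z * (if z i = x i ∧ z (pa i) = x (pa i) then c i else 0) := by
      rw [Finset.sum_comm]
      refine Finset.sum_congr rfl fun i _ => ?_
      rw [hμdef, Finset.mul_sum]
      exact Finset.sum_congr rfl fun z _ => by split_ifs <;> ring
    calc a * μr + ∑ i ∈ E, c i * μ i
        = ∑ z, p z * ((if z r = x r then a else 0)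
            + ∑ i ∈ E, (if z i = x i ∧ z (pa i) = x (pa i) then c i else 0)) := by
          rw [step1, step2, ← Finset.sum_add_distrib]
          exact Finset.sum_congr rfl fun z _ => by rw [mul_add, Finset.mul_sum]
      _ ≤ ∑ z, p z * lam z :=
          Finset.sum_le_sum fun z _ => mul_le_mul_of_nonneg_left (key z) (hp0 z)
  -- the minimal element of E has parent r
  have hi0mem : E.min' hEne ∈ E := Finset.min'_mem _ _
  have hi0ne : E.min' hEne ≠ r := (Finset.mem_erase.1 hi0mem).1
  have hpai0 : pa (E.min' hEne) = r := by
    by_contra hne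
    have h1 : E.min' hEne ≤ pa (E.min' hEne) :=
      Finset.min'_le _ _ (Finset.mem_erase.2 ⟨hne, Finset.mem_univ _⟩)
    exact absurd (hpa _ hi0ne) (not_lt.2 h1)
  have hμrge : μ (E.min' hEne) ≤ μr := by
    rw [hμdef, hμrdef]
    refine Finset.sum_le_sum fun z _ => ?_
    split_ifs with h1 h2
    · exact le_refl _
    · exact absurd (hpai0 ▸ h1.2) h2
    · exact hp0 z
    · exact le_refl _
  -- bounds on m
  have hμ0 : ∀ i, 0 ≤ μ i := by
    intro i
    refine Finset.sum_nonneg fun z _ => ?_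
    split_ifs
    · exact hp0 z
    · exact le_refl _
  have hm0 : 0 ≤ m := Finset.le_inf' hEne _ fun i _ => hμ0 i
  have hmle : ∀ i ∈ E, m ≤ μ i := fun i hi => Finset.inf'_le _ hi
  have hsum : a + ∑ i ∈ E, c i = lam x := (hrepar x).symm
  calc m = 1 * m := (one_mul m).symm
    _ ≤ lam x * m := mul_le_mul_of_nonneg_right hx1 hm0
    _ = a * m + ∑ i ∈ E, c i * m := by rw [← hsum, add_mul, Finset.sum_mul]
    _ ≤ a * μr + ∑ i ∈ E, c i * μ i :=
        add_le_add
          (mul_le_mul_of_nonneg_left ((hmle _ hi0mem).trans hμrge) ha)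
          (Finset.sum_le_sum fun i hi => mul_le_mul_of_nonneg_left (hmle i hi) (hc i))
    _ ≤ ∑ z, p z * lam z := hE1
end

section
/- Let q be a distribution on a finite product space with tree G, split into hidden part H and observed part O with assignment x=(x_h,x_o). Suppose q(z)=0 whenever z_o ≠ x_o (q is supported on assignments agreeing with x_o). If I(x;μ_q) = 0 where μ_q are the tree marginals of q, then I(x_h; μ_{q,H}) + (1−|P_H|)·q(total mass) = 0, where μ_{q,H} are the marginals restricted to hidden nodes and hidden-hidden edges, I(x_h;μ_{q,H}) = Σ_{i∈H}(1−dᵢ^H)μᵢ(xᵢ) + Σ_{(i,j)∈E_H}μᵢⱼ(xᵢ,xⱼ), dᵢ^H is the number of hidden neighbors of i, and |P_H| is the number of connected components of the induced hidden subgraph. -/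
/-!
With `m i = μᵢ(xᵢ)` and `w (i, j) = μᵢⱼ(xᵢ, xⱼ)`, charging each edge to its two endpoints rewrites
`I` over a vertex set `S` as `∑_{i ∈ S} m i + ∑_{ij} (w (i, j) - m i - m j)`, the edges ranging over
those inside `S`. Since `q` is clamped to `x` on `O`, every observed vertex has `m i = τ` and every
edge with an observed endpoint contributes `-τ`. Hence `I(x; μ_q) - I(x_h; μ_{q,H})` is
`(|O| - |E \ E_H|) τ`, and counting the edges of the tree (`|V| - 1`) and of the hidden forest
(`|H| - |P_H|`) gives `|O| - |E \ E_H| = 1 - |P_H|`.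
-/

open Finset

namespace SimpleGraph

theorem IsAcyclic.card_edgeFinset_add_card_connectedComponent {V : Type*} [Fintype V]
    {G : SimpleGraph V} [DecidableRel G.Adj] (hG : G.IsAcyclic) :
    #G.edgeFinset + Nat.card G.ConnectedComponent = Fintype.card V := by
  classical
  have htree (c : G.ConnectedComponent) : #c.toSimpleGraph.edgeFinset + 1 = Nat.card c :=
    (hG.isTree_connectedComponent c).card_edgeFinset.trans Nat.card_eq_fintype_card.symm
  have hdeg (c : G.ConnectedComponent) (v : c) : c.toSimpleGraph.degree v = G.degree v := by
    convert degree_induce_of_neighborSet_subset (G := G) (s := c.supp) (v := v)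
      fun _ hw => c.mem_supp_of_adj_mem_supp v.2 hw <;> rfl
  have hedges : ∑ c : G.ConnectedComponent, #c.toSimpleGraph.edgeFinset = #G.edgeFinset := by
    have : 2 * ∑ c : G.ConnectedComponent, #c.toSimpleGraph.edgeFinset = 2 * #G.edgeFinset := by
      simp_rw [mul_sum, ← sum_degrees_eq_twice_card_edges, hdeg]
      exact Fintype.sum_fiberwise G.connectedComponentMk fun v => G.degree v
    omega
  have hverts : ∑ c : G.ConnectedComponent, Nat.card c = Fintype.card V := by
    rw [Fintype.card_eq_sum_ones, ← Fintype.sum_fiberwise G.connectedComponentMk (fun _ => 1)]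
    simp only [sum_const, card_univ, smul_eq_mul, mul_one, Nat.card_eq_fintype_card]
    exact sum_congr rfl fun c _ => Fintype.card_congr (Equiv.refl _)
  rw [Nat.card_eq_fintype_card, ← hverts, ← hedges, ← card_univ, card_eq_sum_ones,
    ← sum_add_distrib]
  exact sum_congr rfl fun c _ => htree c

section OrderedEdges

variable {V : Type*} [Fintype V] [LinearOrder V] (G : SimpleGraph V) [DecidableRel G.Adj]

theorem sum_card_neighborFinset_filter_nsmul_eq_sum_edges (p : V → Prop) [DecidablePred p]
    {M : Type*} [AddCommMonoid M] (f : V → M) :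
    ∑ i ∈ univ.filter p, #((G.neighborFinset i).filter p) • f i
      = ∑ e ∈ univ.filter (fun e : V × V => e.1 < e.2 ∧ G.Adj e.1 e.2 ∧ p e.1 ∧ p e.2),
          (f e.1 + f e.2) := by
  have hlhs : ∑ i ∈ univ.filter p, #((G.neighborFinset i).filter p) • f i
      = ∑ i, ∑ j, if G.Adj i j ∧ p i ∧ p j then f i else 0 := by
    rw [sum_filter]
    refine sum_congr rfl fun i _ => ?_
    rw [← sum_const, sum_filter, neighborFinset_eq_filter, sum_filter]
    by_cases hi : p i <;> simp [hi, ← ite_and, and_comm]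
  rw [hlhs, sum_filter, Fintype.sum_prod_type]
  simp only [ite_add_zero, sum_add_distrib]
  conv_rhs => arg 2; rw [sum_comm]
  rw [← sum_add_distrib]
  refine sum_congr rfl fun i _ => ?_
  rw [← sum_add_distrib]
  refine sum_congr rfl fun j _ => ?_
  simp only [G.adj_comm j i]
  rcases lt_trichotomy i j with h | rfl | h
  · simp [h, h.not_gt]
  · simp
  · simp [h, h.not_gt, and_comm]

theorem card_filter_lt_adj_mem_eq_card_edgeFinset_induce (s : Set V) [DecidablePred (· ∈ s)] :
    #(univ.filter fun e : V × V => e.1 < e.2 ∧ G.Adj e.1 e.2 ∧ e.1 ∈ s ∧ e.2 ∈ s)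
      = #(G.induce s).edgeFinset := by
  have hdeg (a : s) : (G.induce s).degree a = #((G.neighborFinset a).filter (· ∈ s)) := by
    rw [← card_neighborFinset_eq_degree, ← card_map, map_neighborFinset_induce]
    congr 1; ext; simp
  have hsum := G.sum_card_neighborFinset_filter_nsmul_eq_sum_edges (· ∈ s) (fun _ => 1)
  rw [sum_subtype (F := inferInstance) _ (p := (· ∈ s)) (by simp)] at hsum
  simp only [← hdeg, smul_eq_mul, mul_one, sum_degrees_eq_twice_card_edges, sum_const] at hsum
  omega

theorem card_filter_lt_adj_eq_card_edgeFinset :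
    #(univ.filter fun e : V × V => e.1 < e.2 ∧ G.Adj e.1 e.2) = #G.edgeFinset := by
  simpa [card_edgeFinset_induce_of_support_subset] using G.card_filter_lt_adj_mem_eq_card_edgeFinset_induce Set.univ

theorem sum_one_sub_card_mul_add_sum_edges (p : V → Prop) [DecidablePred p]
    {R : Type*} [CommRing R] (m : V → R) (w : V × V → R) :
    ∑ i ∈ univ.filter p, (1 - (#((G.neighborFinset i).filter p) : R)) * m i
        + ∑ e ∈ univ.filter (fun e : V × V => e.1 < e.2 ∧ G.Adj e.1 e.2 ∧ p e.1 ∧ p e.2), w e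
      = ∑ i ∈ univ.filter p, m i
        + ∑ e ∈ univ.filter (fun e : V × V => e.1 < e.2 ∧ G.Adj e.1 e.2 ∧ p e.1 ∧ p e.2),
            (w e - m e.1 - m e.2) := by
  have hdeg := G.sum_card_neighborFinset_filter_nsmul_eq_sum_edges p m
  simp only [nsmul_eq_mul] at hdeg
  simp only [sub_mul, one_mul, sum_sub_distrib, sub_sub, ← hdeg]
  ring

variable {G} in
theorem IsTree.sum_one_sub_degree_mul_add_sum_edges_eq (hG : G.IsTree) (H : Set V)
    [DecidablePred (· ∈ H)] {R : Type*} [CommRing R] (m : V → R) (w : V × V → R) (τ : R)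
    (hobs : ∀ i ∉ H, m i = τ)
    (hcross : ∀ e : V × V, ¬(e.1 ∈ H ∧ e.2 ∈ H) → w e - m e.1 - m e.2 = -τ) :
    ∑ i, (1 - (G.degree i : R)) * m i
        + ∑ e ∈ univ.filter (fun e : V × V => e.1 < e.2 ∧ G.Adj e.1 e.2), w e
      = ∑ i ∈ univ.filter (· ∈ H), (1 - (#((G.neighborFinset i).filter (· ∈ H)) : R)) * m i
        + ∑ e ∈ univ.filter (fun e : V × V => e.1 < e.2 ∧ G.Adj e.1 e.2 ∧ e.1 ∈ H ∧ e.2 ∈ H), w e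
        + (1 - (Nat.card (G.induce H).ConnectedComponent : R)) * τ := by
  set E := univ.filter fun e : V × V => e.1 < e.2 ∧ G.Adj e.1 e.2
  have hEH : univ.filter (fun e : V × V => e.1 < e.2 ∧ G.Adj e.1 e.2 ∧ e.1 ∈ H ∧ e.2 ∈ H)
      = E.filter fun e => e.1 ∈ H ∧ e.2 ∈ H := by
    simp only [E, filter_filter, and_assoc]
  have hfull := G.sum_one_sub_card_mul_add_sum_edges (fun _ => True) m w
  simp only [filter_true, card_neighborFinset_eq_degree, and_self, and_true] at hfull
  rw [hfull, G.sum_one_sub_card_mul_add_sum_edges (· ∈ H), hEH,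
    ← sum_filter_add_sum_filter_not univ (· ∈ H),
    ← sum_filter_add_sum_filter_not E fun e => e.1 ∈ H ∧ e.2 ∈ H,
    sum_congr rfl fun i hi => hobs i (mem_filter.1 hi).2,
    sum_congr rfl fun e he => hcross e (mem_filter.1 he).2]
  have hcount : #(univ.filter (· ∉ H)) + Nat.card (G.induce H).ConnectedComponent
      = #(E.filter fun e => ¬(e.1 ∈ H ∧ e.2 ∈ H)) + 1 := by
    have hE : #E + 1 = Fintype.card V := by
      rw [G.card_filter_lt_adj_eq_card_edgeFinset]; exact hG.card_edgeFinset
    have hforest : #(E.filter fun e => e.1 ∈ H ∧ e.2 ∈ H)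
        + Nat.card (G.induce H).ConnectedComponent = #(univ.filter (· ∈ H)) := by
      rw [← hEH, G.card_filter_lt_adj_mem_eq_card_edgeFinset_induce H,
        (hG.isAcyclic.induce H).card_edgeFinset_add_card_connectedComponent,
        Fintype.card_subtype]
    have hV := card_filter_add_card_filter_not (s := univ) (· ∈ H)
    have hEsplit := card_filter_add_card_filter_not (s := E) fun e => e.1 ∈ H ∧ e.2 ∈ H
    rw [card_univ] at hV
    omega
  replace hcount := congrArg (Nat.cast (R := R)) hcount
  push_cast at hcount
  simp only [sum_const, nsmul_eq_mul]
  linear_combination τ * hcount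

end OrderedEdges

end SimpleGraph

theorem stmt17_general {n : ℕ} {X : Fin n → Type*} [∀ i, Fintype (X i)]
    [∀ i, DecidableEq (X i)]
    (G : SimpleGraph (Fin n)) [DecidableRel G.Adj] (hG : G.IsTree)
    (H : Set (Fin n)) [DecidablePred (· ∈ H)]
    (x : ∀ i, X i)
    (q : (∀ i, X i) → ℝ)
    (hsupp : ∀ z, q z ≠ 0 → ∀ i, i ∉ H → z i = x i)
    (hIfull : (∑ i, (1 - (G.degree i : ℝ)) * (∑ z, if z i = x i then q z else 0))
      + (∑ e ∈ Finset.univ.filter (fun e : Fin n × Fin n => e.1 < e.2 ∧ G.Adj e.1 e.2),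
          ∑ z, if z e.1 = x e.1 ∧ z e.2 = x e.2 then q z else 0) = 0) :
    (∑ i ∈ Finset.univ.filter (· ∈ H),
        (1 - (((G.neighborFinset i).filter (· ∈ H)).card : ℝ))
          * (∑ z, if z i = x i then q z else 0))
      + (∑ e ∈ Finset.univ.filter
            (fun e : Fin n × Fin n => e.1 < e.2 ∧ G.Adj e.1 e.2 ∧ e.1 ∈ H ∧ e.2 ∈ H),
          ∑ z, if z e.1 = x e.1 ∧ z e.2 = x e.2 then q z else 0)
      + (1 - (Nat.card (G.induce H).ConnectedComponent : ℝ)) * (∑ z, q z) = 0 := by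
  have hobs (i : Fin n) (hi : i ∉ H) : (∑ z, if z i = x i then q z else 0) = ∑ z, q z :=
    sum_congr rfl fun z _ => by by_cases hz : q z = 0 <;> simp [hz, hsupp z _ i hi]
  have hcross (e : Fin n × Fin n) (he : ¬(e.1 ∈ H ∧ e.2 ∈ H)) :
      (∑ z, if z e.1 = x e.1 ∧ z e.2 = x e.2 then q z else 0)
        - (∑ z, if z e.1 = x e.1 then q z else 0) - (∑ z, if z e.2 = x e.2 then q z else 0)
        = -∑ z, q z := by
    rw [← sum_sub_distrib, ← sum_sub_distrib, ← sum_neg_distrib]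
    refine sum_congr rfl fun z _ => ?_
    by_cases hz : q z = 0
    · simp [hz]
    · rcases not_and_or.1 he with h | h <;> simp [hsupp z hz _ h]
  have hsplit := hG.sum_one_sub_degree_mul_add_sum_edges_eq H _ _ _ hobs hcross
  rw [hIfull] at hsplit
  exact hsplit.symm

/-- If a nonnegative `q` is supported on assignments agreeing with `x` on the observed
coordinates and `I(x;μ_q) = 0` (no positive part), then
`I(x_h;μ_{q,H}) + (1 − |P_H|)·τ = 0`, where `τ` is the total mass of `q`,
`dᵢ^H` counts hidden neighbors and `|P_H|` the hidden components. -/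
theorem stmt17 {n : ℕ} {X : Fin n → Type*} [∀ i, Fintype (X i)] [∀ i, Nonempty (X i)]
    [∀ i, DecidableEq (X i)]
    (G : SimpleGraph (Fin n)) [DecidableRel G.Adj] (hG : G.IsTree)
    (H : Set (Fin n)) [DecidablePred (· ∈ H)]
    (x : ∀ i, X i)
    (q : (∀ i, X i) → ℝ) (hq0 : ∀ z, 0 ≤ q z)
    (hsupp : ∀ z, q z ≠ 0 → ∀ i, i ∉ H → z i = x i)
    (hIfull : (∑ i, (1 - (G.degree i : ℝ)) * (∑ z, if z i = x i then q z else 0))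
      + (∑ e ∈ Finset.univ.filter (fun e : Fin n × Fin n => e.1 < e.2 ∧ G.Adj e.1 e.2),
          ∑ z, if z e.1 = x e.1 ∧ z e.2 = x e.2 then q z else 0) = 0) :
    (∑ i ∈ Finset.univ.filter (· ∈ H),
        (1 - (((G.neighborFinset i).filter (· ∈ H)).card : ℝ))
          * (∑ z, if z i = x i then q z else 0))
      + (∑ e ∈ Finset.univ.filter
            (fun e : Fin n × Fin n => e.1 < e.2 ∧ G.Adj e.1 e.2 ∧ e.1 ∈ H ∧ e.2 ∈ H),
          ∑ z, if z e.1 = x e.1 ∧ z e.2 = x e.2 then q z else 0)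
      + (1 - (Nat.card (G.induce H).ConnectedComponent : ℝ)) * (∑ z, q z) = 0 :=
  stmt17_general G hG H x q hsupp hIfull
end

section
/- Fix a tree G, an assignment-label pair (x,y), and realizable tree marginals μ over features and a single label. Then the exact maximum max_{p∈P(μ)} p(x,y) equals min_{(i,j)∈E} μᵢⱼ(xᵢ,xⱼ,y): the upper bound holds for every p ∈ P(μ), and it is attained by some p ∈ P(μ) when P(μ) is nonempty and the marginals μ are tree-consistent (i.e., locally consistent pseudo-marginals on a tree). -/
/-!
Each `p(x, y)` is one of the terms of the marginal sum `μᵢⱼ(xᵢ, xⱼ, y)`, which gives the upper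
bound. For attainment, let `m` be the minimum and `p₀ ∈ P(μ)`. Removing the mass `m` at `x` from
the `y`-slice of `p₀` leaves a signed function whose vertex and edge marginals are still
nonnegative. On a tree such marginals are those of a nonnegative function, namely the Markov
chain `ρᵣ(zᵣ) ∏_{v ≠ r} ρ_{par v, v}(z_{par v}, z_v) / ρ_{par v}(z_{par v})`, where `par v` is the
neighbour of `v` nearer to a root `r`; its marginals are computed by summing out leaves one at a
time. Putting the mass `m` back at `x` gives a member of `P(μ)` with `p(x, y) = m`.
-/

open Finset

namespace TreeMarginal

section Marginals

variable {V : Type*} [Fintype V] [DecidableEq V] {X : V → Type*} [∀ v, Fintype (X v)]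
  [∀ v, DecidableEq (X v)]

def vertexMarginal (q : (∀ v, X v) → ℝ) (i : V) (a : X i) : ℝ :=
  ∑ z, if z i = a then q z else 0

def edgeMarginal (q : (∀ v, X v) → ℝ) (i j : V) (a : X i) (b : X j) : ℝ :=
  ∑ z, if z i = a ∧ z j = b then q z else 0

lemma edgeMarginal_comm (q : (∀ v, X v) → ℝ) (i j : V) (a : X i) (b : X j) :
    edgeMarginal q j i b a = edgeMarginal q i j a b :=
  sum_congr rfl fun _ _ => if_congr and_comm rfl rfl

lemma sum_edgeMarginal_right (q : (∀ v, X v) → ℝ) (i j : V) (a : X i) :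
    ∑ b, edgeMarginal q i j a b = vertexMarginal q i a := by
  unfold edgeMarginal vertexMarginal
  rw [sum_comm]
  refine sum_congr rfl fun z _ => ?_
  by_cases h : z i = a <;> simp [h]

lemma sum_edgeMarginal_left (q : (∀ v, X v) → ℝ) (i j : V) (b : X j) :
    ∑ a, edgeMarginal q i j a b = vertexMarginal q j b := by
  simp only [← edgeMarginal_comm q i j, sum_edgeMarginal_right]

lemma sum_vertexMarginal (q : (∀ v, X v) → ℝ) (i : V) :
    ∑ a, vertexMarginal q i a = ∑ z, q z := by
  unfold vertexMarginal
  rw [sum_comm]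
  simp

lemma sum_ite_ite_add {ι : Type*} [Fintype ι] [DecidableEq ι] (P : ι → Prop) [DecidablePred P]
    (x : ι) (t : ℝ) (q : ι → ℝ) :
    ∑ z, (if P z then (if z = x then t else 0) + q z else 0)
      = (if P x then t else 0) + ∑ z, if P z then q z else 0 := by
  simp only [ite_add_zero, sum_add_distrib]
  congr 1
  rw [sum_eq_single x] <;> aesop

lemma sum_ite_sub_ite {ι : Type*} [Fintype ι] [DecidableEq ι] (P : ι → Prop) [DecidablePred P]
    (x : ι) (t : ℝ) (q : ι → ℝ) :
    ∑ z, (if P z then q z - (if z = x then t else 0) else 0)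
      = (∑ z, if P z then q z else 0) - if P x then t else 0 := by
  rw [eq_sub_iff_add_eq, add_comm, ← sum_ite_ite_add]
  exact sum_congr rfl fun z _ => by split_ifs <;> ring

lemma edgeMarginal_ite_add (x : ∀ v, X v) (t : ℝ) (q : (∀ v, X v) → ℝ) (i j : V) (a : X i)
    (b : X j) :
    edgeMarginal (fun z => (if z = x then t else 0) + q z) i j a b
      = (if x i = a ∧ x j = b then t else 0) + edgeMarginal q i j a b :=
  sum_ite_ite_add (fun z : ∀ v, X v => z i = a ∧ z j = b) x t q

lemma edgeMarginal_sub_ite (q : (∀ v, X v) → ℝ) (x : ∀ v, X v) (t : ℝ) (i j : V) (a : X i)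
    (b : X j) :
    edgeMarginal (fun z => q z - if z = x then t else 0) i j a b
      = edgeMarginal q i j a b - if x i = a ∧ x j = b then t else 0 :=
  sum_ite_sub_ite (fun z : ∀ v, X v => z i = a ∧ z j = b) x t q

lemma vertexMarginal_sub_ite (q : (∀ v, X v) → ℝ) (x : ∀ v, X v) (t : ℝ) (i : V) (a : X i) :
    vertexMarginal (fun z => q z - if z = x then t else 0) i a
      = vertexMarginal q i a - if x i = a then t else 0 :=
  sum_ite_sub_ite (fun z : ∀ v, X v => z i = a) x t q

lemma edgeMarginal_nonneg {q : (∀ v, X v) → ℝ} (hq : ∀ z, 0 ≤ q z) (i j : V) (a : X i) (b : X j) :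
    0 ≤ edgeMarginal q i j a b :=
  sum_nonneg fun z _ => by split_ifs; exacts [hq z, le_rfl]

lemma vertexMarginal_nonneg {q : (∀ v, X v) → ℝ} (hq : ∀ z, 0 ≤ q z) (i : V) (a : X i) :
    0 ≤ vertexMarginal q i a :=
  sum_nonneg fun z _ => by split_ifs; exacts [hq z, le_rfl]

lemma edgeMarginal_le_vertexMarginal {q : (∀ v, X v) → ℝ} (hq : ∀ z, 0 ≤ q z) (i j : V)
    (a : X i) (b : X j) : edgeMarginal q i j a b ≤ vertexMarginal q i a := by
  rw [← sum_edgeMarginal_right]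
  exact single_le_sum (fun b _ => edgeMarginal_nonneg hq i j a b) (mem_univ b)

lemma le_edgeMarginal {q : (∀ v, X v) → ℝ} (hq : ∀ z, 0 ≤ q z) (x : ∀ v, X v) (i j : V) :
    q x ≤ edgeMarginal q i j (x i) (x j) :=
  (if_pos ⟨rfl, rfl⟩).symm.trans_le <|
    single_le_sum (f := fun z => if z i = x i ∧ z j = x j then q z else 0)
      (fun z _ => by split_ifs; exacts [hq z, le_rfl]) (mem_univ x)

end Marginals

section Realization

variable {V : Type*} [Fintype V] [DecidableEq V] {X : V → Type*} [∀ v, Fintype (X v)]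
  [∀ v, DecidableEq (X v)] {Y : Type*} [Fintype Y]

-- Membership in `P(μ)`: `p` is a distribution of `(X, Y)` with edge-label marginals `μ`.
def IsRealization (G : SimpleGraph V) (μ : ∀ i j, X i → X j → Y → ℝ)
    (p : (∀ v, X v) → Y → ℝ) : Prop :=
  (∀ z y, 0 ≤ p z y) ∧ ∑ z, ∑ y, p z y = 1 ∧
    ∀ i j, G.Adj i j → ∀ a b y, edgeMarginal (p · y) i j a b = μ i j a b y

variable {G : SimpleGraph V} {μ : ∀ i j, X i → X j → Y → ℝ} {p : (∀ v, X v) → Y → ℝ}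

lemma IsRealization.apply_le (hp : IsRealization G μ p) (x : ∀ v, X v) (y : Y) {i j : V}
    (hij : G.Adj i j) : p x y ≤ μ i j (x i) (x j) y :=
  hp.2.2 i j hij _ _ y ▸ le_edgeMarginal (hp.1 · y) x i j

lemma IsRealization.symm (hp : IsRealization G μ p) {i j : V} (hij : G.Adj i j) (a : X i)
    (b : X j) (y : Y) : μ j i b a y = μ i j a b y := by
  rw [← hp.2.2 i j hij, ← hp.2.2 j i hij.symm, edgeMarginal_comm]

lemma IsRealization.update [DecidableEq Y] (hp : IsRealization G μ p) (y : Y)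
    {q : (∀ v, X v) → ℝ} (hq0 : ∀ z, 0 ≤ q z) (hqs : ∑ z, q z = ∑ z, p z y)
    (hqm : ∀ i j, G.Adj i j → ∀ a b, edgeMarginal q i j a b = edgeMarginal (p · y) i j a b) :
    IsRealization G μ fun z => Function.update (p z) y (q z) := by
  refine ⟨fun z y' => ?_, ?_, fun i j hij a b y' => ?_⟩
  · rcases eq_or_ne y' y with rfl | h
    · simpa using hq0 z
    · simpa [h] using hp.1 z y'
  · rw [sum_comm, ← hp.2.1, sum_comm (f := p)]
    refine sum_congr rfl fun y' _ => ?_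
    rcases eq_or_ne y' y with rfl | h
    · simpa using hqs
    · simp [h]
  · rw [← hp.2.2 i j hij a b y']
    rcases eq_or_ne y' y with rfl | h
    · simpa using hqm i j hij a b
    · simp [h]

end Realization

section RowNormalize

variable {α β : Type*} [Fintype β]

-- A zero row is sent to the uniform distribution, so that every row sums to `1`.
noncomputable def rowNormalize (P : α → β → ℝ) (a : α) (b : β) : ℝ :=
  if ∑ b', P a b' = 0 then (Fintype.card β : ℝ)⁻¹ else P a b / ∑ b', P a b'

variable {P : α → β → ℝ} {a : α}

lemma rowNormalize_nonneg (hP : ∀ b, 0 ≤ P a b) (b : β) : 0 ≤ rowNormalize P a b := by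
  unfold rowNormalize
  split_ifs
  · positivity
  · exact div_nonneg (hP b) (sum_nonneg fun b _ => hP b)

lemma sum_rowNormalize [Nonempty β] (P : α → β → ℝ) (a : α) : ∑ b, rowNormalize P a b = 1 := by
  unfold rowNormalize
  split_ifs with h
  · simp
  · rw [← sum_div, div_self h]

lemma mul_rowNormalize (hP : ∀ b, 0 ≤ P a b) (b : β) :
    (∑ b', P a b') * rowNormalize P a b = P a b := by
  unfold rowNormalize
  split_ifs with h
  · rw [h, zero_mul, (sum_eq_zero_iff_of_nonneg fun b _ => hP b).1 h b (mem_univ b)]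
  · rw [mul_div_cancel₀ _ h]

end RowNormalize

lemma sum_sum_update {V : Type*} [Fintype V] [DecidableEq V] {X : V → Type*}
    [∀ v, Fintype (X v)] (i : V) (F : (∀ v, X v) → ℝ) :
    ∑ z, ∑ b : X i, F (Function.update z i b) = Fintype.card (X i) * ∑ z, F z := by
  have key : ∀ (c b : X i) (w : ∀ j : {j // j ≠ i}, X j),
      Function.update ((Equiv.piSplitAt i X).symm (c, w)) i b
        = (Equiv.piSplitAt i X).symm (b, w) := by
    intro c b w; funext j
    rcases eq_or_ne j i with rfl | hj
    · simp
    · simp [Function.update, hj]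
  rw [← Equiv.sum_comp (Equiv.piSplitAt i X).symm, ← Equiv.sum_comp (Equiv.piSplitAt i X).symm F,
    Fintype.sum_prod_type, Fintype.sum_prod_type]
  simp_rw [key]
  rw [sum_const, nsmul_eq_mul, card_univ, sum_comm]

section RootedSubtree

variable {V : Type*} {r : V} {par : V → V}

def IsRootedSubtree (r : V) (par : V → V) (S : Finset V) : Prop :=
  r ∈ S ∧ ∀ u ∈ S, u ≠ r → par u ∈ S

lemma IsRootedSubtree.insert [DecidableEq V] {S : Finset V} (hS : IsRootedSubtree r par S) {u : V}
    (hu : par u ∈ S) : IsRootedSubtree r par (insert u S) := by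
  refine ⟨mem_insert_of_mem hS.1, fun i hi hir => mem_insert_of_mem ?_⟩
  rcases mem_insert.1 hi with rfl | hi
  exacts [hu, hS.2 i hi hir]

lemma IsRootedSubtree.filter_depth_lt {d : V → ℕ} (hd : ∀ v, v ≠ r → d (par v) + 1 = d v)
    (hd0 : d r = 0) {S : Finset V} (hS : IsRootedSubtree r par S) {k : ℕ} (hk : 0 < k) :
    IsRootedSubtree r par (S.filter (d · < k)) := by
  refine ⟨mem_filter.2 ⟨hS.1, hd0 ▸ hk⟩, fun i hi hir => ?_⟩
  obtain ⟨hiS, hik⟩ := mem_filter.1 hi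
  have := hd i hir
  exact mem_filter.2 ⟨hS.2 i hiS hir, by omega⟩

end RootedSubtree

section TreeProduct

variable {V : Type*} [Fintype V] [DecidableEq V] {X : V → Type*} [∀ v, Fintype (X v)]

/- The Markov chain on the rooted tree with root law `κ` and transition kernels `f v` from `par v`
to `v`, restricted to `S`: a vertex outside `S` carries the uniform factor `1 / |X i|`, so the
product stays a function of all coordinates while leaves of `S` are summed out one at a time. -/
noncomputable def treeProduct (r : V) (par : V → V) (κ : X r → ℝ)
    (f : ∀ v, X (par v) → X v → ℝ) (S : Finset V) (z : ∀ v, X v) : ℝ :=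
  κ (z r) * ∏ i ∈ univ.erase r,
    if i ∈ S then f i (z (par i)) (z i) else (Fintype.card (X i) : ℝ)⁻¹

variable {r : V} {par : V → V} {κ : X r → ℝ} {f : ∀ v, X (par v) → X v → ℝ}

lemma treeProduct_nonneg (hκ : ∀ c, 0 ≤ κ c) (hf : ∀ v, v ≠ r → ∀ a b, 0 ≤ f v a b)
    (S : Finset V) (z : ∀ v, X v) : 0 ≤ treeProduct r par κ f S z := by
  refine mul_nonneg (hκ _) (prod_nonneg fun i hi => ?_)
  split_ifs
  exacts [hf i (ne_of_mem_erase hi) _ _, by positivity]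

lemma treeProduct_update_of_notMem {S : Finset V} {w : V} (hwS : w ∉ S) (hwr : w ≠ r)
    (hleaf : ∀ i ∈ S, i ≠ r → par i ≠ w) (z : ∀ v, X v) (b : X w) :
    treeProduct r par κ f S (Function.update z w b) = treeProduct r par κ f S z := by
  unfold treeProduct
  rw [Function.update_of_ne hwr.symm]
  congr 1
  refine prod_congr rfl fun i hi => ?_
  split_ifs with hiS
  · have hir := (mem_erase.1 hi).1
    rw [Function.update_of_ne (hleaf i hiS hir),
      Function.update_of_ne (ne_of_mem_of_not_mem hiS hwS)]
  · rfl

variable [∀ v, Nonempty (X v)]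

lemma treeProduct_eq_mul_erase {S : Finset V} {w : V} (hwS : w ∈ S) (hwr : w ≠ r)
    (z : ∀ v, X v) :
    treeProduct r par κ f S z
      = Fintype.card (X w) * f w (z (par w)) (z w) * treeProduct r par κ f (S.erase w) z := by
  have hw : w ∈ univ.erase r := mem_erase.2 ⟨hwr, mem_univ w⟩
  unfold treeProduct
  rw [← mul_prod_erase _ _ hw, ← mul_prod_erase _ _ hw, if_pos hwS, if_neg (notMem_erase w S)]
  have hrest : ∏ i ∈ (univ.erase r).erase w,
      (if i ∈ S then f i (z (par i)) (z i) else (Fintype.card (X i) : ℝ)⁻¹)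
      = ∏ i ∈ (univ.erase r).erase w,
      (if i ∈ S.erase w then f i (z (par i)) (z i) else (Fintype.card (X i) : ℝ)⁻¹) :=
    prod_congr rfl fun i hi => by simp [ne_of_mem_erase hi]
  rw [hrest]
  field_simp

lemma sum_mul_treeProduct_eq_erase {S : Finset V} {w : V} (hwS : w ∈ S)
    (hwr : w ≠ r) (hleaf : ∀ i ∈ S, i ≠ r → par i ≠ w)
    (g : (∀ v, X v) → X w → ℝ) (hg : ∀ z b c, g (Function.update z w b) c = g z c) :
    ∑ z, g z (z w) * treeProduct r par κ f S z
      = ∑ z, (∑ b, g z b * f w (z (par w)) b) * treeProduct r par κ f (S.erase w) z := by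
  have hc : (Fintype.card (X w) : ℝ) ≠ 0 := Nat.cast_ne_zero.2 Fintype.card_ne_zero
  have hpw := hleaf w hwS hwr
  refine mul_left_cancel₀ hc ?_
  rw [← sum_sum_update w, mul_sum]
  refine sum_congr rfl fun z _ => ?_
  rw [sum_mul, mul_sum]
  refine sum_congr rfl fun b _ => ?_
  rw [Function.update_self, hg, treeProduct_eq_mul_erase hwS hwr, Function.update_of_ne hpw,
    Function.update_self, treeProduct_update_of_notMem (notMem_erase w S) hwr
      fun i hi => hleaf i (mem_of_mem_erase hi)]
  ring

lemma sum_mul_treeProduct_singleton (h : X r → ℝ) :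
    ∑ z, h (z r) * treeProduct r par κ f {r} z = ∑ c, h c * κ c := by
  set g : ∀ v, X v → ℝ :=
    Function.update (fun v _ => (Fintype.card (X v) : ℝ)⁻¹) r (fun c => h c * κ c)
  have hr : r ∈ univ := mem_univ r
  have hg : ∀ z : ∀ v, X v, h (z r) * treeProduct r par κ f {r} z = ∏ v, g v (z v) := by
    intro z
    rw [← mul_prod_erase _ _ hr, treeProduct, ← mul_assoc]
    congr 1
    · simp [g]
    · refine prod_congr rfl fun v hv => ?_
      have hvr := ne_of_mem_erase hv
      simp [g, hvr]
  have hcard : ∀ v ∈ univ.erase r, ∑ b, g v b = 1 := by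
    intro v hv
    simp [g, ne_of_mem_erase hv]
  rw [sum_congr rfl fun z _ => hg z, ← Fintype.prod_sum, ← mul_prod_erase _ _ hr,
    prod_eq_one hcard, mul_one]
  simp [g]

variable {d : V → ℕ}

lemma sum_mul_treeProduct_eq_of_subset (hd : ∀ v, v ≠ r → d (par v) + 1 = d v)
    (hf : ∀ v, v ≠ r → ∀ c, ∑ b, f v c b = 1) {T : Finset V} (hT : IsRootedSubtree r par T)
    (g : (∀ v, X v) → ℝ) (hg : ∀ z u b, u ∉ T → g (Function.update z u b) = g z)
    (S : Finset V) (hTS : T ⊆ S) :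
    ∑ z, g z * treeProduct r par κ f S z = ∑ z, g z * treeProduct r par κ f T z := by
  induction S using Finset.strongInduction with
  | H S ih =>
    rcases (S \ T).eq_empty_or_nonempty with hST | hST
    · rw [Subset.antisymm (sdiff_eq_empty_iff_subset.1 hST) hTS]
    obtain ⟨w, hw, hmax⟩ := exists_max_image _ d hST
    obtain ⟨hwS, hwT⟩ := mem_sdiff.1 hw
    have hwr : w ≠ r := (ne_of_mem_of_not_mem hT.1 hwT).symm
    -- a vertex of `S \ T` of maximal depth has no child in `S`
    have hleaf : ∀ i ∈ S, i ≠ r → par i ≠ w := by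
      rintro i hiS hir rfl
      have hiT : i ∉ T := fun hiT => hwT (hT.2 i hiT hir)
      have := hmax i (mem_sdiff.2 ⟨hiS, hiT⟩)
      have := hd i hir
      omega
    rw [sum_mul_treeProduct_eq_erase hwS hwr hleaf (fun z _ => g z) fun z b _ => hg z w b hwT]
    simp only [← mul_sum, hf w hwr, mul_one]
    exact ih _ (erase_ssubset hwS) fun u hu => mem_erase.2 ⟨ne_of_mem_of_not_mem hu hwT, hTS hu⟩

lemma sum_mul_treeProduct_eq_filter_depth_lt (hd : ∀ v, v ≠ r → d (par v) + 1 = d v)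
    (hd0 : d r = 0) (hf : ∀ v, v ≠ r → ∀ c, ∑ b, f v c b = 1) {S : Finset V}
    (hS : IsRootedSubtree r par S) {u : V} (huS : u ∈ S) (hur : u ≠ r)
    (φ : X (par u) → X u → ℝ) :
    ∑ z, φ (z (par u)) (z u) * treeProduct r par κ f S z
      = ∑ z, (∑ b, φ (z (par u)) b * f u (z (par u)) b)
          * treeProduct r par κ f (S.filter (d · < d u)) z := by
  have hdu := hd u hur
  have hpu : par u ≠ u := fun h => by simp [h] at hdu
  have hF := hS.filter_depth_lt hd hd0 (k := d u) (by omega)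
  have hpuF : par u ∈ S.filter (d · < d u) := mem_filter.2 ⟨hS.2 u huS hur, by omega⟩
  have huF : u ∉ S.filter (d · < d u) := fun h => (lt_irrefl _ (mem_filter.1 h).2)
  have hleaf : ∀ i ∈ insert u (S.filter (d · < d u)), i ≠ r → par i ≠ u := by
    rintro i hi hir rfl
    have := hd i hir
    rcases mem_insert.1 hi with hi | hi
    · rw [← hi] at this
      omega
    · have := (mem_filter.1 hi).2
      omega
  have hφ : ∀ z v b, v ∉ insert u (S.filter (d · < d u)) →
      φ (Function.update z v b (par u)) (Function.update z v b u) = φ (z (par u)) (z u) := by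
    intro z v b hv
    rw [Function.update_of_ne (ne_of_mem_of_not_mem (mem_insert_of_mem hpuF) hv),
      Function.update_of_ne (ne_of_mem_of_not_mem (mem_insert_self u _) hv)]
  rw [sum_mul_treeProduct_eq_of_subset hd hf (hF.insert hpuF) _ hφ S
      (insert_subset huS (filter_subset _ _)),
    sum_mul_treeProduct_eq_erase (mem_insert_self _ _) hur hleaf
      (fun z b => φ (z (par u)) b) fun z b c => by rw [Function.update_of_ne hpu],
    erase_insert huF]

variable {ρ : ∀ v, X v → ℝ}

lemma sum_mul_treeProduct_vertex (hd : ∀ v, v ≠ r → d (par v) + 1 = d v) (hd0 : d r = 0)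
    (hf : ∀ v, v ≠ r → ∀ c, ∑ b, f v c b = 1)
    (hρ : ∀ v, v ≠ r → ∀ b, ∑ a, ρ (par v) a * f v a b = ρ v b) {S : Finset V}
    (hS : IsRootedSubtree r par S) {u : V} (huS : u ∈ S) (h : X u → ℝ) :
    ∑ z, h (z u) * treeProduct r par (ρ r) f S z = ∑ c, h c * ρ u c := by
  obtain ⟨k, hk⟩ : ∃ k, d u = k := ⟨_, rfl⟩
  induction k generalizing S u with
  | zero =>
    obtain rfl : u = r := by
      by_contra hur
      have := hd u hur
      omega
    have hsingle : IsRootedSubtree u par {u} :=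
      ⟨mem_singleton_self u, fun v hv hvr => absurd (mem_singleton.1 hv) hvr⟩
    rw [sum_mul_treeProduct_eq_of_subset hd hf hsingle _ ?_ S (singleton_subset_iff.2 huS),
      sum_mul_treeProduct_singleton]
    intro z v b hv
    rw [Function.update_of_ne (Ne.symm (mt mem_singleton.2 hv))]
  | succ k ih =>
    have hur : u ≠ r := by rintro rfl; omega
    have hdu := hd u hur
    rw [sum_mul_treeProduct_eq_filter_depth_lt hd hd0 hf hS huS hur fun _ b => h b,
      ih (hS.filter_depth_lt hd hd0 (by omega)) (mem_filter.2 ⟨hS.2 u huS hur, by omega⟩)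
        (fun a => ∑ b, h b * f u a b) (by omega)]
    simp_rw [sum_mul]
    rw [sum_comm]
    refine sum_congr rfl fun b _ => ?_
    rw [← hρ u hur b, mul_sum]
    exact sum_congr rfl fun a _ => by ring

lemma sum_mul_treeProduct_edge (hd : ∀ v, v ≠ r → d (par v) + 1 = d v) (hd0 : d r = 0)
    (hf : ∀ v, v ≠ r → ∀ c, ∑ b, f v c b = 1)
    (hρ : ∀ v, v ≠ r → ∀ b, ∑ a, ρ (par v) a * f v a b = ρ v b) {v : V} (hvr : v ≠ r)
    (φ : X (par v) → X v → ℝ) :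
    ∑ z, φ (z (par v)) (z v) * treeProduct r par (ρ r) f univ z
      = ∑ a, ∑ b, φ a b * (ρ (par v) a * f v a b) := by
  have huniv : IsRootedSubtree r par univ := ⟨mem_univ r, fun u _ _ => mem_univ (par u)⟩
  have hdv := hd v hvr
  rw [sum_mul_treeProduct_eq_filter_depth_lt hd hd0 hf huniv (mem_univ v) hvr,
    sum_mul_treeProduct_vertex hd hd0 hf hρ (huniv.filter_depth_lt hd hd0 (by omega))
      (mem_filter.2 ⟨mem_univ _, by omega⟩) fun a => ∑ b, φ a b * f v a b]
  simp_rw [sum_mul]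
  exact sum_congr rfl fun a _ => sum_congr rfl fun b _ => by ring

end TreeProduct

end TreeMarginal

namespace SimpleGraph

variable {V : Type*} {G : SimpleGraph V}

lemma IsTree.exists_adj_dist_add_one (hG : G.IsTree) {r v : V} (hv : v ≠ r) :
    ∃ u, G.Adj u v ∧ G.dist r u + 1 = G.dist r v := by
  obtain ⟨p, -, hp⟩ := hG.connected.exists_path_of_dist r v
  have hnil : ¬ p.Nil := Walk.not_nil_of_ne hv.symm
  refine ⟨p.penultimate, p.adj_penultimate hnil, ?_⟩
  have hlen := Walk.length_dropLast_add_one hnil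
  have hle : G.dist r p.penultimate ≤ p.dropLast.length := dist_le _
  rcases hG.dist_eq_dist_add_one_of_adj r (p.adj_penultimate hnil) with h | h <;> omega

lemma IsTree.exists_parent (hG : G.IsTree) (r : V) :
    ∃ par : V → V, ∀ v, v ≠ r → G.Adj (par v) v ∧ G.dist r (par v) + 1 = G.dist r v := by
  have : Nonempty V := ⟨r⟩
  choose! par hpar using fun v (hv : v ≠ r) => hG.exists_adj_dist_add_one hv
  exact ⟨par, hpar⟩

lemma IsTree.eq_of_adj_of_dist_add_one (hG : G.IsTree) {r u u' v : V} (hu : G.Adj u v)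
    (hu' : G.Adj u' v) (h : G.dist r u + 1 = G.dist r v) (h' : G.dist r u' + 1 = G.dist r v) :
    u = u' := by
  obtain ⟨p, -, hp⟩ := hG.connected.exists_path_of_dist r u
  obtain ⟨p', -, hp'⟩ := hG.connected.exists_path_of_dist r u'
  have hq := (p.concat hu).isPath_of_length_eq_dist (by rw [Walk.length_concat, hp, h])
  have hq' := (p'.concat hu').isPath_of_length_eq_dist (by rw [Walk.length_concat, hp', h'])
  have := congrArg (fun q : G.Path r v => q.1.penultimate)
    ((hG.isAcyclic.subsingleton_path r v).elim ⟨_, hq⟩ ⟨_, hq'⟩)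
  simpa [Walk.penultimate_concat] using this

lemma IsTree.eq_parent_of_adj (hG : G.IsTree) {r : V} {par : V → V}
    (hpar : ∀ v, v ≠ r → G.Adj (par v) v ∧ G.dist r (par v) + 1 = G.dist r v) {i j : V}
    (hij : G.Adj i j) : (j ≠ r ∧ par j = i) ∨ (i ≠ r ∧ par i = j) := by
  rcases hG.dist_eq_dist_add_one_of_adj r hij with h | h
  · have hi : i ≠ r := by rintro rfl; simp at h
    exact Or.inr ⟨hi, hG.eq_of_adj_of_dist_add_one (hpar i hi).1 hij.symm (hpar i hi).2 h.symm⟩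
  · have hj : j ≠ r := by rintro rfl; simp at h
    exact Or.inl ⟨hj, hG.eq_of_adj_of_dist_add_one (hpar j hj).1 hij (hpar j hj).2 h.symm⟩

lemma Connected.exists_adj_of_adj (hG : G.Connected) {u v : V} (huv : G.Adj u v) (i : V) :
    ∃ j, G.Adj i j := by
  have : Nontrivial V := ⟨u, v, huv.ne⟩
  exact G.mem_support.1 (hG.preconnected.support_eq_univ ▸ Set.mem_univ i)

lemma inf'_filter_adj_le [Fintype V] [LinearOrder V] [DecidableRel G.Adj]
    (hne : (univ.filter fun e : V × V => e.1 < e.2 ∧ G.Adj e.1 e.2).Nonempty) (g : V → V → ℝ)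
    (hg : ∀ i j, G.Adj i j → g j i = g i j) {i j : V} (hij : G.Adj i j) :
    (univ.filter fun e : V × V => e.1 < e.2 ∧ G.Adj e.1 e.2).inf' hne (fun e => g e.1 e.2)
      ≤ g i j := by
  rcases hij.ne.lt_or_gt with h | h
  · exact inf'_le _ (mem_filter.2 ⟨mem_univ (i, j), h, hij⟩)
  · exact hg i j hij ▸ inf'_le _ (mem_filter.2 ⟨mem_univ (j, i), h, hij.symm⟩)

open TreeMarginal

variable [Fintype V] [DecidableEq V] {X : V → Type*} [∀ v, Fintype (X v)]
  [∀ v, DecidableEq (X v)] [∀ v, Nonempty (X v)]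

theorem IsTree.exists_nonneg_edgeMarginal_eq (hG : G.IsTree) (s : (∀ v, X v) → ℝ)
    (hs₁ : ∀ i a, 0 ≤ vertexMarginal s i a)
    (hs₂ : ∀ i j, G.Adj i j → ∀ a b, 0 ≤ edgeMarginal s i j a b) :
    ∃ q : (∀ v, X v) → ℝ, (∀ z, 0 ≤ q z) ∧ ∑ z, q z = ∑ z, s z ∧
      ∀ i j, G.Adj i j → ∀ a b, edgeMarginal q i j a b = edgeMarginal s i j a b := by
  obtain ⟨r⟩ := hG.connected.nonempty
  obtain ⟨par, hpar⟩ := hG.exists_parent r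
  set f : ∀ v, X (par v) → X v → ℝ := fun v => rowNormalize (edgeMarginal s (par v) v)
  set q := treeProduct r par (vertexMarginal s r) f univ
  have hd : ∀ v, v ≠ r → G.dist r (par v) + 1 = G.dist r v := fun v hv => (hpar v hv).2
  have hf : ∀ v, v ≠ r → ∀ c, ∑ b, f v c b = 1 := fun v _ c => sum_rowNormalize _ c
  have hmul : ∀ v, v ≠ r → ∀ a b,
      vertexMarginal s (par v) a * f v a b = edgeMarginal s (par v) v a b := by
    intro v hv a b
    rw [← sum_edgeMarginal_right s (par v) v a]
    exact mul_rowNormalize (hs₂ _ _ (hpar v hv).1 a) b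
  have hρ : ∀ v, v ≠ r → ∀ b, ∑ a, vertexMarginal s (par v) a * f v a b = vertexMarginal s v b :=
    fun v hv b => by simp only [hmul v hv, sum_edgeMarginal_left]
  have hparent : ∀ v, v ≠ r → ∀ a b,
      edgeMarginal q (par v) v a b = edgeMarginal s (par v) v a b := by
    intro v hv a b
    have := sum_mul_treeProduct_edge hd dist_self hf hρ hv
      fun a' b' => if a' = a ∧ b' = b then (1 : ℝ) else 0
    simpa [edgeMarginal, ite_and, hmul v hv] using this
  refine ⟨q, treeProduct_nonneg (hs₁ r)
    (fun v hv a b => rowNormalize_nonneg (hs₂ _ _ (hpar v hv).1 a) b) univ, ?_, ?_⟩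
  · have := sum_mul_treeProduct_vertex hd dist_self hf hρ
      ⟨mem_univ r, fun u _ _ => mem_univ (par u)⟩ (mem_univ r) fun _ => 1
    simpa [sum_vertexMarginal] using this
  · intro i j hij a b
    rcases hG.eq_parent_of_adj hpar hij with ⟨hj, rfl⟩ | ⟨hi, rfl⟩
    · exact hparent j hj a b
    · rw [← edgeMarginal_comm, hparent i hi, edgeMarginal_comm]

theorem IsTree.exists_edgeMarginal_eq_of_le (hG : G.IsTree) {p : (∀ v, X v) → ℝ}
    (hp : ∀ z, 0 ≤ p z) (x : ∀ v, X v) {m : ℝ} (hm : 0 ≤ m)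
    (hm₁ : ∀ i, m ≤ vertexMarginal p i (x i))
    (hm₂ : ∀ i j, G.Adj i j → m ≤ edgeMarginal p i j (x i) (x j)) :
    ∃ q : (∀ v, X v) → ℝ, (∀ z, 0 ≤ q z) ∧ ∑ z, q z = ∑ z, p z ∧
      (∀ i j, G.Adj i j → ∀ a b, edgeMarginal q i j a b = edgeMarginal p i j a b) ∧ m ≤ q x := by
  have hs₁ : ∀ i a, 0 ≤ vertexMarginal (fun z => p z - if z = x then m else 0) i a := by
    intro i a
    rw [vertexMarginal_sub_ite]
    split_ifs with h
    · exact sub_nonneg.2 (h ▸ hm₁ i)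
    · simpa using vertexMarginal_nonneg hp i a
  have hs₂ : ∀ i j, G.Adj i j → ∀ a b,
      0 ≤ edgeMarginal (fun z => p z - if z = x then m else 0) i j a b := by
    intro i j hij a b
    rw [edgeMarginal_sub_ite]
    split_ifs with h
    · exact sub_nonneg.2 (h.1 ▸ h.2 ▸ hm₂ i j hij)
    · simpa using edgeMarginal_nonneg hp i j a b
  obtain ⟨q, hq0, hqs, hqm⟩ := hG.exists_nonneg_edgeMarginal_eq _ hs₁ hs₂
  refine ⟨fun z => (if z = x then m else 0) + q z,
    fun z => add_nonneg (by split_ifs <;> simp [hm]) (hq0 z), ?_, fun i j hij a b => ?_, ?_⟩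
  · simp [sum_add_distrib, hqs, sum_sub_distrib]
  · rw [edgeMarginal_ite_add, hqm i j hij, edgeMarginal_sub_ite]
    ring
  · simpa using hq0 x

end SimpleGraph

open TreeMarginal

theorem stmt19_general {n : ℕ} {X : Fin n → Type*} {Y : Type*} [∀ i, Fintype (X i)] [Fintype Y]
    [∀ i, Nonempty (X i)] [∀ i, DecidableEq (X i)] [DecidableEq Y]
    (G : SimpleGraph (Fin n)) [DecidableRel G.Adj] (hG : G.IsTree)
    (hne : (Finset.univ.filter (fun e : Fin n × Fin n => e.1 < e.2 ∧ G.Adj e.1 e.2)).Nonempty)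
    (μ2 : ∀ i j, X i → X j → Y → ℝ)
    -- tree-consistency of the marginals
    (hμ0 : ∀ i j a b ybar, 0 ≤ μ2 i j a b ybar)
    -- realizability: P(μ) is nonempty
    (hPne : ∃ p : (∀ i, X i) → Y → ℝ, (∀ z ybar, 0 ≤ p z ybar) ∧ (∑ z, ∑ ybar, p z ybar = 1) ∧
      ∀ i j, G.Adj i j → ∀ a b ybar,
        (∑ z, if z i = a ∧ z j = b then p z ybar else 0) = μ2 i j a b ybar)
    (x : ∀ i, X i) (y : Y) :
    IsGreatest
      { v : ℝ | ∃ p : (∀ i, X i) → Y → ℝ,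
          ((∀ z ybar, 0 ≤ p z ybar) ∧ (∑ z, ∑ ybar, p z ybar = 1) ∧
            ∀ i j, G.Adj i j → ∀ a b ybar,
              (∑ z, if z i = a ∧ z j = b then p z ybar else 0) = μ2 i j a b ybar)
          ∧ v = p x y }
      ((Finset.univ.filter (fun e : Fin n × Fin n => e.1 < e.2 ∧ G.Adj e.1 e.2)).inf' hne
        (fun e => μ2 e.1 e.2 (x e.1) (x e.2) y)) := by
  obtain ⟨p₀, hp₀⟩ : ∃ p₀, IsRealization G μ2 p₀ := hPne
  set m := (univ.filter fun e : Fin n × Fin n => e.1 < e.2 ∧ G.Adj e.1 e.2).inf' hne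
    fun e => μ2 e.1 e.2 (x e.1) (x e.2) y
  have hub : ∀ p, IsRealization G μ2 p → p x y ≤ m := fun p hp =>
    le_inf' hne _ fun e he => hp.apply_le x y (mem_filter.1 he).2.2
  have hm₂ : ∀ i j, G.Adj i j → m ≤ edgeMarginal (p₀ · y) i j (x i) (x j) := fun i j hij =>
    (hp₀.2.2 i j hij _ _ y).symm ▸ G.inf'_filter_adj_le hne (fun i j => μ2 i j (x i) (x j) y)
      (fun i j hij => hp₀.symm hij _ _ y) hij
  have hm₁ : ∀ i, m ≤ vertexMarginal (p₀ · y) i (x i) := fun i =>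
    have ⟨e, he⟩ := hne
    have ⟨j, hij⟩ := hG.connected.exists_adj_of_adj (mem_filter.1 he).2.2 i
    (hm₂ i j hij).trans (edgeMarginal_le_vertexMarginal (hp₀.1 · y) i j _ _)
  obtain ⟨q, hq0, hqs, hqm, hqx⟩ := hG.exists_edgeMarginal_eq_of_le (hp₀.1 · y) x
    (le_inf' hne _ fun _ _ => hμ0 _ _ _ _ _) hm₁ hm₂
  have hp := hp₀.update y hq0 hqs hqm
  exact ⟨⟨_, hp, le_antisymm (hqx.trans_eq (Function.update_self y (q x) (p₀ x)).symm) (hub _ hp)⟩,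
    fun v ⟨p, hp, hv⟩ => hv ▸ hub p hp⟩

/-- Exact maximum of `p(x,y)` over `P(μ)`: it equals `min_{(i,j)∈E} μᵢⱼ(xᵢ,xⱼ,y)` —
the upper bound holds for every member, and it is attained when `P(μ)` is nonempty and
`μ` is tree-consistent (nonnegative, locally consistent, normalized). -/
theorem stmt19 {n : ℕ} {X : Fin n → Type*} {Y : Type*} [∀ i, Fintype (X i)] [Fintype Y]
    [∀ i, Nonempty (X i)] [Nonempty Y] [∀ i, DecidableEq (X i)] [DecidableEq Y]
    (G : SimpleGraph (Fin n)) [DecidableRel G.Adj] (hG : G.IsTree)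
    (hne : (Finset.univ.filter (fun e : Fin n × Fin n => e.1 < e.2 ∧ G.Adj e.1 e.2)).Nonempty)
    (μ1 : ∀ i, X i → Y → ℝ) (μ2 : ∀ i j, X i → X j → Y → ℝ)
    -- tree-consistency of the marginals
    (hμ0 : ∀ i j a b ybar, 0 ≤ μ2 i j a b ybar)
    (hloc1 : ∀ i j, G.Adj i j → ∀ a ybar, ∑ b, μ2 i j a b ybar = μ1 i a ybar)
    (hloc2 : ∀ i j, G.Adj i j → ∀ b ybar, ∑ a, μ2 i j a b ybar = μ1 j b ybar)
    (hnorm : ∀ i j, G.Adj i j → ∑ a, ∑ b, ∑ ybar, μ2 i j a b ybar = 1)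
    -- realizability: P(μ) is nonempty
    (hPne : ∃ p : (∀ i, X i) → Y → ℝ, (∀ z ybar, 0 ≤ p z ybar) ∧ (∑ z, ∑ ybar, p z ybar = 1) ∧
      ∀ i j, G.Adj i j → ∀ a b ybar,
        (∑ z, if z i = a ∧ z j = b then p z ybar else 0) = μ2 i j a b ybar)
    (x : ∀ i, X i) (y : Y) :
    IsGreatest
      { v : ℝ | ∃ p : (∀ i, X i) → Y → ℝ,
          ((∀ z ybar, 0 ≤ p z ybar) ∧ (∑ z, ∑ ybar, p z ybar = 1) ∧
            ∀ i j, G.Adj i j → ∀ a b ybar,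
              (∑ z, if z i = a ∧ z j = b then p z ybar else 0) = μ2 i j a b ybar)
          ∧ v = p x y }
      ((Finset.univ.filter (fun e : Fin n × Fin n => e.1 < e.2 ∧ G.Adj e.1 e.2)).inf' hne
        (fun e => μ2 e.1 e.2 (x e.1) (x e.2) y)) :=
  stmt19_general G hG hne μ2 hμ0 hPne x y
end
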